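/- arXiv:1512.08925 — 3 statements merged into one kernel-verified Lean document; each statement's English description precedes it below -/
import Mathlib

section
/- Let Σ ⊆ ℝ² be a closed, arcwise connected set, let x₀ ∈ Σ, and let 0 < ε ≤ 1/10 and radii r₀, r₁ satisfy 2·r₁·ε < r₀ < r₁ < diam(Σ)/2 and β_Σ(x₀,r₁,r₀) ≤ ε. Let A ⊆ [r₀, r₁] be the set of all r for which some connected component S of ∂B_r(x₀) \ Σ satisfies H¹(S) > r·(π + 2·arcsin(ε·r₁/r)). Then A is contained in an interval of length at most 2·ε·r₁. -/
open MeasureTheory Metric Set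
open scoped ENNReal NNReal RealInnerProductSpace

noncomputable section

abbrev E2 := EuclideanSpace ℝ (Fin 2)

/-- The affine line through `x` with direction `v`. -/
def lineThru (x v : E2) : Set E2 := {y | ∃ t : ℝ, y = x + t • v}

/-- The flatness `β_Σ(x,r)`. -/
def flatness (S : Set E2) (x : E2) (r : ℝ) : ℝ :=
  sInf { b | ∃ v : E2, v ≠ 0 ∧
    b = Metric.hausdorffDist (S ∩ closure (ball x r)) (lineThru x v ∩ closure (ball x r)) / r }

/-- The annular flatness `β_Σ(x,r,s)`. -/
def flatnessAnn (S : Set E2) (x : E2) (r s : ℝ) : ℝ :=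
  sInf { b | ∃ v : E2, v ≠ 0 ∧
    b = Metric.hausdorffDist ((S ∩ closure (ball x r)) \ ball x s)
        ((lineThru x v ∩ closure (ball x r)) \ ball x s) / r }

/-- A vector field `σ ∈ L²(Ω;ℝ²)` is admissible for `S` if `div σ = f` in `𝒟'(Ω \ S)`. -/
def Admissible (Ω S : Set E2) (f : E2 → ℝ) (σ : E2 → E2) : Prop :=
  MemLp σ 2 (volume.restrict Ω) ∧
  ∀ φ : E2 → ℝ, ContDiff ℝ (⊤ : ℕ∞) φ → HasCompactSupport φ → tsupport φ ⊆ Ω \ S →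
    ∫ x in Ω, ⟪σ x, gradient φ x⟫ = ∫ x in Ω, f x * φ x

/-- The compliance `𝒞(S)`. -/
def compliance (Ω S : Set E2) (f : E2 → ℝ) : ℝ :=
  sInf { e | ∃ σ : E2 → E2, Admissible Ω S f σ ∧ e = (1/2) * ∫ x in Ω, ‖σ x‖^2 }

/-- A minimizer of the penalized compliance problem. -/
def IsMinimizer (Ω : Set E2) (f : E2 → ℝ) (lam : ℝ) (S : Set E2) : Prop :=
  S ⊆ closure Ω ∧ IsCompact S ∧ IsConnected S ∧
  ∀ S' : Set E2, S' ⊆ closure Ω → IsCompact S' → IsConnected S' →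
    ENNReal.ofReal (compliance Ω S f) + ENNReal.ofReal lam * μH[1] S ≤
      ENNReal.ofReal (compliance Ω S' f) + ENNReal.ofReal lam * μH[1] S'

/-- The admissible field of minimal L² norm, i.e. `σ_S = ∇u_S`, extended by zero outside `Ω`. -/
def IsMinimalField (Ω S : Set E2) (f : E2 → ℝ) (σ : E2 → E2) : Prop :=
  Admissible Ω S f σ ∧ (∀ x, x ∉ Ω → σ x = 0) ∧
  ∀ σ' : E2 → E2, Admissible Ω S f σ' →
    ∫ x in Ω, ‖σ x‖^2 ≤ ∫ x in Ω, ‖σ' x‖^2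

/-- `ω_S(x,r)`. -/
def omegaEnergy (Ω : Set E2) (f : E2 → ℝ) (S : Set E2) (x : E2) (r : ℝ) : ℝ :=
  sSup { e | ∃ (S' : Set E2) (σ' : E2 → E2), IsCompact S' ∧ IsConnected S' ∧ S' ⊆ closure Ω ∧
    symmDiff S' S ⊆ closure (ball x r) ∧ IsMinimalField Ω S' f σ' ∧
    e = (1/r) * ∫ y in ball x r, ‖σ' y‖^2 }

/-- `γ_Σ(x₀,r₀,r₁)`. -/
def gammaSup (Ω S : Set E2) (x₀ : E2) (r₀ r₁ : ℝ) : ℝ :=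
  sSup { g | ∃ r ∈ Set.Ioo r₀ r₁, ∃ y ∈ Metric.sphere x₀ r \ (S ∪ frontier Ω),
    g = (μH[1] (connectedComponentIn (Metric.sphere x₀ r \ (S ∪ frontier Ω)) y)).toReal / r }

/-- An arc: a homeomorphic image of `[0,1]`. -/
def IsArc (S : Set E2) : Prop :=
  ∃ γ : ℝ → E2, ContinuousOn γ (Set.Icc 0 1) ∧ Set.InjOn γ (Set.Icc 0 1) ∧ S = γ '' Set.Icc 0 1

/-- Arcwise connectedness of a subset of a topological space. -/
def ArcConnected {X : Type*} [TopologicalSpace X] (S : Set X) : Prop :=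
  ∀ x ∈ S, ∀ y ∈ S, x ≠ y → ∃ γ : ℝ → X, ContinuousOn γ (Set.Icc 0 1) ∧
    Set.InjOn γ (Set.Icc 0 1) ∧ γ 0 = x ∧ γ 1 = y ∧ Set.MapsTo γ (Set.Icc 0 1) S

/-- A simple curve of class `C^{1,α}`. -/
def IsSimpleC1Curve (α : ℝ) (S : Set E2) : Prop :=
  ∃ γ γ' : ℝ → E2,
    S = γ '' Set.Icc 0 1 ∧ Set.InjOn γ (Set.Icc 0 1) ∧
    (∀ t ∈ Set.Icc (0:ℝ) 1, HasDerivWithinAt γ (γ' t) (Set.Icc 0 1) t) ∧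
    (∀ t ∈ Set.Icc (0:ℝ) 1, γ' t ≠ 0) ∧
    ∃ C : ℝ≥0, HolderOnWith C α.toNNReal γ' (Set.Icc 0 1)

/-- A `C¹` domain: bounded, connected, open, with boundary locally (up to rotation) the
graph of a `C¹` function, the domain lying locally on one side of it. -/
def IsC1Domain (Ω : Set E2) : Prop :=
  IsOpen Ω ∧ Bornology.IsBounded Ω ∧ IsConnected Ω ∧
  ∀ x ∈ frontier Ω, ∃ (e₁ e₂ : E2) (g : ℝ → ℝ) (ε : ℝ),
    ‖e₁‖ = 1 ∧ ‖e₂‖ = 1 ∧ ⟪e₁, e₂⟫ = 0 ∧ 0 < ε ∧ ContDiff ℝ 1 g ∧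
    ∀ y ∈ Metric.ball x ε,
      (y ∈ frontier Ω ↔ ⟪y - x, e₂⟫ = g ⟪y - x, e₁⟫) ∧
      (y ∈ Ω ↔ ⟪y - x, e₂⟫ < g ⟪y - x, e₁⟫)


private lemma near_even_of_cos_pos {x μ : ℝ} (h0 : 0 < μ) (h2 : μ ≤ Real.pi/2)
    (hs : |Real.sin x| < Real.sin μ) (hc : 0 < Real.cos x) :
    ∃ k : ℤ, |x - 2*Real.pi*k| < μ := by
  have hπ := Real.pi_pos
  set k := round (x / (2*Real.pi)) with hk
  refine ⟨k, ?_⟩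
  have h2π : (0:ℝ) < 2*Real.pi := by linarith
  have hrnd : |x / (2*Real.pi) - k| ≤ 1/2 := abs_sub_round _
  have hd : |x - 2*Real.pi*k| ≤ Real.pi := by
    have h3 : x - 2*Real.pi*(k:ℝ) = (x/(2*Real.pi) - k)*(2*Real.pi) := by
      field_simp
    rw [h3, abs_mul, abs_of_pos h2π]
    nlinarith
  set d := x - 2*Real.pi*k with hdd
  have hx : x = d + k * (2*Real.pi) := by rw [hdd]; ring
  have hsin : Real.sin d = Real.sin x := by
    conv_rhs => rw [hx]
    rw [Real.sin_add_int_mul_two_pi]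
  have hcos : Real.cos d = Real.cos x := by
    conv_rhs => rw [hx]
    rw [Real.cos_add_int_mul_two_pi]
  have hd2 : |d| < Real.pi/2 := by
    by_contra hcon
    push_neg at hcon
    have h4 : Real.cos |d| ≤ 0 :=
      Real.cos_nonpos_of_pi_div_two_le_of_le hcon (by cases abs_cases d <;> linarith)
    rw [Real.cos_abs] at h4
    linarith [hcos ▸ hc]
  have habs : |Real.sin d| = Real.sin |d| := by
    rcases le_or_gt 0 d with h | h
    · rw [abs_of_nonneg h, abs_of_nonneg (Real.sin_nonneg_of_nonneg_of_le_pi h (by linarith [abs_of_nonneg h ▸ hd2]))]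
    · have hd' : 0 ≤ -d := by linarith
      have h1 : Real.sin d ≤ 0 := by
        have h5 := Real.sin_nonneg_of_nonneg_of_le_pi hd' (by cases abs_cases d <;> linarith)
        rw [Real.sin_neg] at h5; linarith
      rw [abs_of_neg h, Real.sin_neg, abs_of_nonpos h1]
  have : |d| < μ := by
    by_contra hcon
    push_neg at hcon
    have hdIcc : |d| ∈ Icc (-(Real.pi/2)) (Real.pi/2) := ⟨by linarith [abs_nonneg d], hd2.le⟩
    have hμIcc : μ ∈ Icc (-(Real.pi/2)) (Real.pi/2) := ⟨by linarith, h2⟩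
    have hmono := Real.strictMonoOn_sin.monotoneOn hμIcc hdIcc hcon
    rw [← habs, hsin] at hmono
    linarith
  exact this

private lemma near_odd_of_cos_neg {x μ : ℝ} (h0 : 0 < μ) (h2 : μ ≤ Real.pi/2)
    (hs : |Real.sin x| < Real.sin μ) (hc : Real.cos x < 0) :
    ∃ k : ℤ, |x - (2*Real.pi*k + Real.pi)| < μ := by
  obtain ⟨k, hk⟩ := near_even_of_cos_pos h0 h2
    (by rw [Real.sin_sub_pi, abs_neg]; exact hs)
    (by rw [Real.cos_sub_pi]; linarith) (x := x - Real.pi)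
  refine ⟨k, ?_⟩
  have : x - Real.pi - 2*Real.pi*k = x - (2*Real.pi*k + Real.pi) := by ring
  rwa [this] at hk

private lemma int_gap {j : ℤ} {n : ℤ} (h1 : 2*Real.pi*(n:ℝ) < 2*Real.pi*j)
    (h2 : 2*Real.pi*(j:ℝ) < 2*Real.pi*((n:ℝ)+1)) : False := by
  have hπ := Real.pi_pos
  have h2π : (0:ℝ) < 2*Real.pi := by linarith
  have hn : (n:ℝ) < (j:ℝ) := lt_of_mul_lt_mul_left h1 h2π.le
  have hj : (j:ℝ) < (n:ℝ)+1 := lt_of_mul_lt_mul_left h2 h2π.le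
  have hn' : n < j := by exact_mod_cast hn
  have hj' : j < n + 1 := by exact_mod_cast hj
  omega

private lemma angle_contra {μ u w G₁ G₂ : ℝ} (hμ0 : 0 < μ) (hμ2 : μ < Real.pi/2)
    (hu : 0 ≤ u) (hw : w ≤ 2*Real.pi) (huw : Real.pi + 2*μ < w - u)
    (hG₁ : (0 ≤ G₁ ∧ G₁ ≤ u) ∨ (w ≤ G₁ ∧ G₁ ≤ 2*Real.pi))
    (hG₂ : (0 ≤ G₂ ∧ G₂ ≤ u) ∨ (w ≤ G₂ ∧ G₂ ≤ 2*Real.pi))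
    {j : ℤ} (hj : |G₁ - G₂ - (2*Real.pi*j - Real.pi)| < 2*μ) : False := by
  have hπ := Real.pi_pos
  rw [abs_lt] at hj
  obtain ⟨hjl, hjr⟩ := hj
  rcases hG₁ with ⟨h1a, h1b⟩ | ⟨h1a, h1b⟩ <;> rcases hG₂ with ⟨h2a, h2b⟩ | ⟨h2a, h2b⟩
  · exact int_gap (n := 0) (by push_cast; nlinarith) (by push_cast; nlinarith)
  · exact int_gap (n := -1) (by push_cast; nlinarith) (by push_cast; nlinarith)
  · exact int_gap (n := 1) (by push_cast; nlinarith) (by push_cast; nlinarith)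
  · exact int_gap (n := 0) (by push_cast; nlinarith) (by push_cast; nlinarith)

private lemma exit_first {h : ℝ → ℝ} {a b : ℝ}
    (hcont : ContinuousOn h (Icc 0 1)) (h0 : h 0 ∈ Ioo a b) (h1 : h 1 ∉ Ioo a b) :
    ∃ T ∈ Icc (0:ℝ) 1, (h T = a ∨ h T = b) ∧ ∀ t ∈ Icc 0 T, h t ∈ Icc a b := by
  set K := Icc (0:ℝ) 1 ∩ h ⁻¹' (Ioo a b)ᶜ with hKdef
  have hKc : IsClosed K :=
    ContinuousOn.preimage_isClosed_of_isClosed hcont isClosed_Icc (isOpen_Ioo.isClosed_compl)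
  have hKne : K.Nonempty := ⟨1, ⟨zero_le_one, le_refl 1⟩, h1⟩
  have hbdd : BddBelow K := ⟨0, fun t ht => ht.1.1⟩
  set T := sInf K with hTdef
  have hTK : T ∈ K := hKc.csInf_mem hKne hbdd
  have hT01 : T ∈ Icc (0:ℝ) 1 := hTK.1
  have hnotlt : ∀ t ∈ Icc (0:ℝ) 1, t < T → h t ∈ Ioo a b := by
    intro t ht hlt
    by_contra hc
    exact absurd (csInf_le hbdd ⟨ht, hc⟩) (not_le.mpr hlt)
  have hTpos : 0 < T := by
    rcases eq_or_lt_of_le hT01.1 with he | hlt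
    · exfalso; exact hTK.2 (he ▸ h0)
    · exact hlt
  have hcl : h T ∈ Icc a b := by
    have hcw : ContinuousWithinAt h (Ico 0 T) T :=
      (hcont T hT01).mono (fun t ht => ⟨ht.1, le_trans ht.2.le hT01.2⟩)
    have hTcl : T ∈ closure (Ico 0 T) := by
      rw [closure_Ico (ne_of_lt hTpos)]; exact ⟨hT01.1, le_refl _⟩
    have hmem := hcw.mem_closure_image hTcl
    have himg : h '' Ico 0 T ⊆ Icc a b := by
      rintro x ⟨t, ht, rfl⟩
      exact Ioo_subset_Icc_self (hnotlt t ⟨ht.1, le_trans ht.2.le hT01.2⟩ ht.2)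
    exact isClosed_Icc.closure_subset ((closure_mono himg).trans (by rw [closure_Icc]) hmem)
  refine ⟨T, hT01, ?_, ?_⟩
  · rcases hcl with ⟨hca, hcb⟩
    rcases eq_or_lt_of_le hca with he | hlt
    · exact Or.inl he.symm
    rcases eq_or_lt_of_le hcb with he | hlt2
    · exact Or.inr he
    · exact absurd (⟨hlt, hlt2⟩ : h T ∈ Ioo a b) hTK.2
  · intro t ht
    rcases lt_or_eq_of_le ht.2 with hlt | he
    · exact Ioo_subset_Icc_self (hnotlt t ⟨ht.1, le_trans hlt.le hT01.2⟩ hlt)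
    · rw [he]; exact hcl

private lemma exit_two {h : ℝ → ℝ} {a b : ℝ} (hab : a < b)
    (hcont : ContinuousOn h (Icc 0 1)) (h0 : h 0 ∈ Ioo a b) (h1 : b ≤ h 1) :
    ∃ T₁ T₂ : ℝ, 0 ≤ T₁ ∧ T₁ ≤ T₂ ∧ T₂ ≤ 1 ∧ h T₂ = b ∧ (h T₁ = a ∨ T₁ = 0) ∧
      ∀ t ∈ Icc T₁ T₂, h t ∈ Icc a b := by
  have hbmem : b ∈ h '' Icc 0 1 :=
    intermediate_value_Icc zero_le_one hcont ⟨h0.2.le, h1⟩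
  set M := Icc (0:ℝ) 1 ∩ h ⁻¹' {b} with hMdef
  have hMc : IsClosed M :=
    ContinuousOn.preimage_isClosed_of_isClosed hcont isClosed_Icc isClosed_singleton
  have hMne : M.Nonempty := by
    obtain ⟨t, ht, hte⟩ := hbmem; exact ⟨t, ht, hte⟩
  have hMbdd : BddBelow M := ⟨0, fun t ht => ht.1.1⟩
  set T₂ := sInf M with hT₂def
  have hT₂M : T₂ ∈ M := hMc.csInf_mem hMne hMbdd
  have hT₂01 : T₂ ∈ Icc (0:ℝ) 1 := hT₂M.1
  have hT₂b : h T₂ = b := hT₂M.2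
  have hle : ∀ t ∈ Icc (0:ℝ) T₂, h t ≤ b := by
    intro t ht
    by_contra hgt
    push_neg at hgt
    have ht1 : t ∈ Icc (0:ℝ) 1 := ⟨ht.1, le_trans ht.2 hT₂01.2⟩
    have : b ∈ h '' Icc 0 t :=
      intermediate_value_Icc ht.1 (hcont.mono (fun s hs => ⟨hs.1, le_trans hs.2 ht1.2⟩)) ⟨h0.2.le, hgt.le⟩
    obtain ⟨s, hs, hsb⟩ := this
    have hsT : T₂ ≤ s := csInf_le hMbdd ⟨⟨hs.1, le_trans hs.2 ht1.2⟩, hsb⟩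
    have hst2 : s = T₂ := le_antisymm (le_trans hs.2 ht.2) hsT
    have : t = T₂ := le_antisymm ht.2 (hst2 ▸ hs.2)
    rw [this, hT₂b] at hgt
    exact lt_irrefl _ hgt
  set N := Icc (0:ℝ) T₂ ∩ h ⁻¹' (Iic a) with hNdef
  by_cases hN : N.Nonempty
  · have hNc : IsClosed N :=
      ContinuousOn.preimage_isClosed_of_isClosed
        (hcont.mono (fun s hs => ⟨hs.1, le_trans hs.2 hT₂01.2⟩)) isClosed_Icc isClosed_Iic
    have hNbdd : BddAbove N := ⟨T₂, fun t ht => ht.1.2⟩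
    set T₁ := sSup N with hT₁def
    have hT₁N : T₁ ∈ N := hNc.csSup_mem hN hNbdd
    have hgt : ∀ t, T₁ < t → t ≤ T₂ → a < h t := by
      intro t h1t h2t
      by_contra hcon
      push_neg at hcon
      have h0t : 0 ≤ t := le_trans hT₁N.1.1 h1t.le
      exact absurd (le_csSup hNbdd ⟨⟨h0t, h2t⟩, hcon⟩) (not_le.mpr h1t)
    have hT₁lt : T₁ < T₂ := by
      rcases eq_or_lt_of_le hT₁N.1.2 with he | hlt
      · exfalso
        have := hT₁N.2
        rw [mem_preimage, mem_Iic, he, hT₂b] at this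
        linarith
      · exact hlt
    have hT₁a : h T₁ = a := by
      refine le_antisymm hT₁N.2 ?_
      have hcw : ContinuousWithinAt h (Ioc T₁ T₂) T₁ :=
        (hcont T₁ ⟨hT₁N.1.1, le_trans hT₁N.1.2 hT₂01.2⟩).mono
          (fun s hs => ⟨le_trans hT₁N.1.1 hs.1.le, le_trans hs.2 hT₂01.2⟩)
      have hTcl : T₁ ∈ closure (Ioc T₁ T₂) := by
        rw [closure_Ioc (ne_of_lt hT₁lt)]; exact ⟨le_refl _, hT₁lt.le⟩
      have hmem := hcw.mem_closure_image hTcl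
      have himg : h '' Ioc T₁ T₂ ⊆ Ici a := by
        rintro x ⟨t, ht, rfl⟩
        exact (hgt t ht.1 ht.2).le
      have := (closure_mono himg).trans (by rw [closure_Ici]) hmem
      exact this
    refine ⟨T₁, T₂, hT₁N.1.1, hT₁lt.le, hT₂01.2, hT₂b, Or.inl hT₁a, ?_⟩
    intro t ht
    constructor
    · rcases eq_or_lt_of_le ht.1 with he | hlt
      · rw [← he, hT₁a]
      · exact (hgt t hlt ht.2).le
    · exact hle t ⟨le_trans hT₁N.1.1 ht.1, ht.2⟩
  · refine ⟨0, T₂, le_refl _, hT₂01.1, hT₂01.2, hT₂b, Or.inr rfl, ?_⟩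
    intro t ht
    constructor
    · by_contra hcon
      push_neg at hcon
      exact hN ⟨t, ⟨ht.1, ht.2⟩, hcon.le⟩
    · exact hle t ht

private lemma sign_const {φ : ℝ → ℝ} {a b : ℝ} (hab : a ≤ b)
    (hc : ContinuousOn φ (Icc a b)) (hnz : ∀ t ∈ Icc a b, φ t ≠ 0) :
    (0 < φ a ↔ 0 < φ b) := by
  have ha : a ∈ Icc a b := ⟨le_refl _, hab⟩
  have hb : b ∈ Icc a b := ⟨hab, le_refl _⟩
  constructor
  · intro h
    by_contra hcon
    push_neg at hcon
    have hblt : φ b < 0 := lt_of_le_of_ne hcon (hnz b hb)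
    have : (0:ℝ) ∈ φ '' Icc a b := intermediate_value_Icc' hab hc ⟨hblt.le, h.le⟩
    obtain ⟨t, ht, hte⟩ := this
    exact hnz t ht hte
  · intro h
    by_contra hcon
    push_neg at hcon
    have halt : φ a < 0 := lt_of_le_of_ne hcon (hnz a ha)
    have : (0:ℝ) ∈ φ '' Icc a b := intermediate_value_Icc hab hc ⟨halt.le, h.le⟩
    obtain ⟨t, ht, hte⟩ := this
    exact hnz t ht hte

private lemma circle_confine (c η : ℂ) (hη : ‖η‖ = 1) {ρ μ : ℝ}
    (hρ : 0 < ρ) (hμ0 : 0 < μ) (hμ2 : μ < Real.pi/2)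
    (Scl Cs : Set ℂ) {p : ℂ} (hpS : p ∈ Scl) (hpK : ‖p - c‖ = ρ)
    (hC : IsPreconnected Cs) (hCK : ∀ ζ ∈ Cs, ‖ζ - c‖ = ρ)
    (hCS : ∀ ζ ∈ Cs, ζ ∉ Scl)
    (hμm : ENNReal.ofReal (ρ*(Real.pi + 2*μ)) < μH[1] Cs)
    (hcap : ∀ ζ ∈ Scl, ‖ζ - c‖ = ρ →
      |((starRingEnd ℂ) η * (ζ - c)).im| < ρ * Real.sin μ ∧ ((starRingEnd ℂ) η * (ζ - c)).re ≠ 0) :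
    (∀ ζ ∈ Scl, ‖ζ - c‖ = ρ → 0 < ((starRingEnd ℂ) η * (ζ - c)).re) ∨
    (∀ ζ ∈ Scl, ‖ζ - c‖ = ρ → ((starRingEnd ℂ) η * (ζ - c)).re < 0) := by
  have hπ := Real.pi_pos
  have hCne : Cs.Nonempty := by
    rw [nonempty_iff_ne_empty]
    intro hh
    rw [hh, measure_empty] at hμm
    simp at hμm
  have hpc : p - c ≠ 0 := by
    intro hh
    rw [hh, norm_zero] at hpK
    linarith
  set w : ℂ → ℂ := fun ζ => (ζ - c) / (p - c) with hw
  set g : ℂ → ℝ := fun ζ => Complex.arg (-(w ζ)) + Real.pi with hg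
  set f : ℝ → ℂ := fun t => c + (p - c) * Complex.exp (t * Complex.I) with hf
  have hwabs : ∀ ζ, ‖ζ - c‖ = ρ → ‖w ζ‖ = 1 := by
    intro ζ h
    rw [hw]
    simp only [norm_div, h, hpK]
    exact div_self (ne_of_gt hρ)
  have hwne : ∀ ζ, ζ ≠ p → w ζ ≠ 1 := by
    intro ζ hne h1
    apply hne
    rw [hw] at h1
    simp only [div_eq_one_iff_eq hpc] at h1
    exact sub_left_injective h1
  have hwslit : ∀ ζ, ‖ζ - c‖ = ρ → ζ ≠ p → -(w ζ) ∈ Complex.slitPlane := by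
    intro ζ hζ hne
    rw [Complex.mem_slitPlane_iff]
    by_contra hcon
    push_neg at hcon
    obtain ⟨h1, h2⟩ := hcon
    have him : (w ζ).im = 0 := by simpa using h2
    have hre : 0 ≤ (w ζ).re := by simpa using h1
    have habs := hwabs ζ hζ
    have hwre : w ζ = ((w ζ).re : ℂ) := Complex.ext (by simp) (by simp [him])
    have habs2 : |(w ζ).re| = 1 := by
      rw [← Real.norm_eq_abs, ← Complex.norm_real, ← hwre, habs]
    have hre1 : (w ζ).re = 1 := by cases abs_cases (w ζ).re <;> linarith
    exact hwne ζ hne (by rw [hwre, hre1]; norm_num)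
  have hfg : ∀ ζ, ‖ζ - c‖ = ρ → ζ ≠ p → f (g ζ) = ζ := by
    intro ζ hζ hne
    have habs := hwabs ζ hζ
    have habsneg : ‖-(w ζ)‖ = 1 := by simpa using habs
    have hexp : Complex.exp ((Complex.arg (-(w ζ)) : ℂ) * Complex.I) = -(w ζ) := by
      have h5 := Complex.norm_mul_exp_arg_mul_I (-(w ζ))
      rwa [habsneg, Complex.ofReal_one, one_mul] at h5
    rw [hf, hg]
    show c + (p - c) * Complex.exp (((Complex.arg (-(w ζ)) + Real.pi : ℝ) : ℂ) * Complex.I) = ζ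
    push_cast
    rw [add_mul, Complex.exp_add, hexp, Complex.exp_pi_mul_I]
    have : (p - c) * (-(w ζ) * -1) = ζ - c := by
      rw [hw]
      field_simp
    rw [this]
    ring
  have hgmem : ∀ ζ, ‖ζ - c‖ = ρ → ζ ≠ p → g ζ ∈ Ioo 0 (2*Real.pi) := by
    intro ζ hζ hne
    have h1 : Complex.arg (-(w ζ)) ≠ Real.pi := Complex.slitPlane_arg_ne_pi (hwslit ζ hζ hne)
    have h2 := Complex.arg_le_pi (-(w ζ))
    have h3 := Complex.neg_pi_lt_arg (-(w ζ))
    constructor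
    · show 0 < Complex.arg (-(w ζ)) + Real.pi
      linarith
    · show Complex.arg (-(w ζ)) + Real.pi < 2*Real.pi
      have := lt_of_le_of_ne h2 h1
      linarith
  have hCp : ∀ ζ ∈ Cs, ζ ≠ p := fun ζ hζ hh => hCS ζ hζ (hh ▸ hpS)
  have hgcont : ContinuousOn g Cs := by
    intro ζ hζ
    have hζK := hCK ζ hζ
    apply ContinuousAt.continuousWithinAt
    have hcont2 : ContinuousAt (fun x : ℂ => -((x - c) / (p - c))) ζ := by
      apply ContinuousAt.neg
      exact ((continuous_id.sub continuous_const).div_const _).continuousAt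
    exact (ContinuousAt.comp (g := Complex.arg) (f := fun x : ℂ => -((x - c) / (p - c))) (x := ζ)
      (Complex.continuousAt_arg (hwslit ζ hζK (hCp ζ hζ))) hcont2).add continuousAt_const
  set D := g '' Cs with hD
  have hDne : D.Nonempty := hCne.image g
  have hDsub : D ⊆ Ioo 0 (2*Real.pi) := by
    rintro _ ⟨ζ, hζ, rfl⟩
    exact hgmem ζ (hCK ζ hζ) (hCp ζ hζ)
  have hbddA : BddAbove D := ⟨2*Real.pi, fun d hd => (hDsub hd).2.le⟩
  have hbddB : BddBelow D := ⟨0, fun d hd => (hDsub hd).1.le⟩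
  set u := sInf D with hu
  set W := sSup D with hW
  have huW : u ≤ W := csInf_le_csSup hDne hbddB hbddA
  have hu0 : 0 ≤ u := le_csInf hDne (fun d hd => (hDsub hd).1.le)
  have hW2 : W ≤ 2*Real.pi := csSup_le hDne (fun d hd => (hDsub hd).2.le)
  -- Lipschitz bound on f
  have hexp1 : LipschitzWith 1 (fun t : ℝ => Complex.exp ((t:ℂ) * Complex.I)) := by
    have hder : ∀ t : ℝ, HasDerivAt (fun s : ℝ => Complex.exp ((s:ℂ) * Complex.I))
        (Complex.exp ((t:ℂ)*Complex.I) * Complex.I) t := by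
      intro t
      have h1 : HasDerivAt (fun s : ℝ => ((s:ℂ) * Complex.I)) Complex.I t := by
        simpa using ((hasDerivAt_id t).ofReal_comp.mul_const Complex.I)
      exact h1.cexp
    apply lipschitzWith_of_nnnorm_deriv_le (fun t => (hder t).differentiableAt)
    intro t
    rw [(hder t).deriv]
    rw [← NNReal.coe_le_coe]
    simp [Complex.norm_exp_ofReal_mul_I]
  have hlip : LipschitzWith ρ.toNNReal f := by
    apply LipschitzWith.of_dist_le_mul
    intro t s
    have h5 := hexp1.dist_le_mul t s
    have h6 : dist (f t) (f s) = ‖p - c‖ *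
        dist (Complex.exp ((t:ℂ)*Complex.I)) (Complex.exp ((s:ℂ)*Complex.I)) := by
      rw [hf]
      simp only [dist_eq_norm]
      rw [show c + (p - c) * Complex.exp ((t:ℂ)*Complex.I) - (c + (p - c) * Complex.exp ((s:ℂ)*Complex.I))
          = (p - c) * (Complex.exp ((t:ℂ)*Complex.I) - Complex.exp ((s:ℂ)*Complex.I)) by ring]
      rw [norm_mul]
    rw [h6, hpK]
    have h7 : (ρ.toNNReal : ℝ) = ρ := Real.coe_toNNReal _ hρ.le
    rw [h7]
    calc ρ * dist (Complex.exp ((t:ℂ)*Complex.I)) (Complex.exp ((s:ℂ)*Complex.I))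
        ≤ ρ * (1 * dist t s) := by
          apply mul_le_mul_of_nonneg_left h5 hρ.le
      _ = ρ * dist t s := by ring
  have hsub : Cs ⊆ f '' Icc u W := by
    intro ζ hζ
    exact ⟨g ζ, ⟨csInf_le hbddB ⟨ζ, hζ, rfl⟩, le_csSup hbddA ⟨ζ, hζ, rfl⟩⟩,
      hfg ζ (hCK ζ hζ) (hCp ζ hζ)⟩
  have hmeas : μH[1] Cs ≤ ENNReal.ofReal (ρ * (W - u)) := by
    calc μH[1] Cs ≤ μH[1] (f '' Icc u W) := measure_mono hsub
      _ ≤ (ρ.toNNReal : ℝ≥0∞) ^ (1:ℝ) * μH[1] (Icc u W) :=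
          hlip.lipschitzOnWith.hausdorffMeasure_image_le zero_le_one
      _ = ENNReal.ofReal ρ * ENNReal.ofReal (W - u) := by
          rw [ENNReal.rpow_one, MeasureTheory.hausdorffMeasure_real, Real.volume_Icc]
          rfl
      _ = ENNReal.ofReal (ρ * (W - u)) := (ENNReal.ofReal_mul hρ.le).symm
  have hWu : Real.pi + 2*μ < W - u := by
    have h1 : ENNReal.ofReal (ρ*(Real.pi+2*μ)) < ENNReal.ofReal (ρ*(W - u)) :=
      lt_of_lt_of_le hμm hmeas
    have h2 : ρ*(Real.pi+2*μ) < ρ*(W-u) := by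
      have h0 : 0 ≤ ρ*(Real.pi+2*μ) := by positivity
      exact (ENNReal.ofReal_lt_ofReal_iff_of_nonneg h0).mp h1
    exact lt_of_mul_lt_mul_left h2 hρ.le
  have hconf : ∀ ζ ∈ Scl, ‖ζ - c‖ = ρ → ζ ≠ p → g ζ ≤ u ∨ W ≤ g ζ := by
    intro ζ hζS hζK hζp
    by_contra hcon
    push_neg at hcon
    obtain ⟨h1, h2⟩ := hcon
    obtain ⟨d₁, hd₁D, hd₁⟩ := (csInf_lt_iff hbddB hDne).mp h1
    obtain ⟨d₂, hd₂D, hd₂⟩ := (lt_csSup_iff hbddA hDne).mp h2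
    have hDpre : IsPreconnected D := hC.image g hgcont
    have hmem : g ζ ∈ D := hDpre.Icc_subset hd₁D hd₂D ⟨hd₁.le, hd₂.le⟩
    obtain ⟨ζ', hζ', hgg⟩ := hmem
    have : ζ = ζ' := by
      rw [← hfg ζ hζK hζp, ← hfg ζ' (hCK ζ' hζ') (hCp ζ' hζ'), hgg]
    exact hCS ζ' hζ' (this ▸ hζS)
  set a0 := (starRingEnd ℂ) η * (p - c) with ha0
  have ha0abs : ‖a0‖ = ρ := by
    rw [ha0, norm_mul, Complex.norm_conj, hη, one_mul, hpK]
  set β := Complex.arg a0 with hβ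
  have ha0eq : a0 = (ρ:ℂ) * Complex.exp ((β:ℂ) * Complex.I) := by
    have h5 := Complex.norm_mul_exp_arg_mul_I a0
    rw [ha0abs] at h5
    exact h5.symm
  set G : ℂ → ℝ := fun ζ => if ζ = p then 0 else g ζ with hG
  have hrep : ∀ ζ ∈ Scl, ‖ζ - c‖ = ρ →
      (starRingEnd ℂ) η * (ζ - c) = (ρ:ℂ) * Complex.exp (((β + G ζ : ℝ) : ℂ) * Complex.I) := by
    intro ζ hζS hζK
    by_cases hζp : ζ = p
    · have hGz : G ζ = 0 := by rw [hG]; simp [hζp]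
      rw [hGz, add_zero, hζp, ← ha0, ha0eq]
    · have hfgζ := hfg ζ hζK hζp
      have h5 : ζ - c = (p - c) * Complex.exp (((g ζ : ℝ):ℂ) * Complex.I) := by
        conv_lhs => rw [← hfgζ]
        rw [hf]
        ring
      rw [hG]
      simp only [if_neg hζp]
      calc (starRingEnd ℂ) η * (ζ - c)
          = a0 * Complex.exp (((g ζ : ℝ):ℂ) * Complex.I) := by rw [h5, ha0]; ring
        _ = (ρ:ℂ) * Complex.exp ((β:ℂ) * Complex.I) * Complex.exp (((g ζ : ℝ):ℂ) * Complex.I) := by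
            rw [← ha0eq]
        _ = (ρ:ℂ) * Complex.exp (((β + g ζ : ℝ) : ℂ) * Complex.I) := by
            rw [mul_assoc, ← Complex.exp_add]
            congr 2
            push_cast
            ring
  have hcoord : ∀ ζ ∈ Scl, ‖ζ - c‖ = ρ →
      ((starRingEnd ℂ) η * (ζ - c)).re = ρ * Real.cos (β + G ζ) ∧
      ((starRingEnd ℂ) η * (ζ - c)).im = ρ * Real.sin (β + G ζ) := by
    intro ζ h1 h2
    rw [hrep ζ h1 h2]
    constructor
    · rw [Complex.re_ofReal_mul, Complex.exp_ofReal_mul_I_re]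
    · rw [Complex.im_ofReal_mul, Complex.exp_ofReal_mul_I_im]
  have hGb : ∀ ζ ∈ Scl, ‖ζ - c‖ = ρ →
      ((0 ≤ G ζ ∧ G ζ ≤ u) ∨ (W ≤ G ζ ∧ G ζ ≤ 2*Real.pi)) := by
    intro ζ h1 h2
    by_cases hζp : ζ = p
    · left
      have hGz : G ζ = 0 := by rw [hG]; simp [hζp]
      rw [hGz]
      exact ⟨le_refl 0, hu0⟩
    · have hGz : G ζ = g ζ := by rw [hG]; simp [hζp]
      rw [hGz]
      have hmem := hgmem ζ h2 hζp
      rcases hconf ζ h1 h2 hζp with h | h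
      · exact Or.inl ⟨hmem.1.le, h⟩
      · exact Or.inr ⟨h, hmem.2.le⟩
  by_cases hall : ∀ ζ ∈ Scl, ‖ζ - c‖ = ρ → 0 < ((starRingEnd ℂ) η * (ζ - c)).re
  · exact Or.inl hall
  · push_neg at hall
    obtain ⟨ζ₂, hζ₂S, hζ₂K, hζ₂⟩ := hall
    have hζ₂neg : ((starRingEnd ℂ) η * (ζ₂ - c)).re < 0 :=
      lt_of_le_of_ne hζ₂ (hcap ζ₂ hζ₂S hζ₂K).2
    refine Or.inr ?_
    intro ζ₁ hζ₁S hζ₁K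
    by_contra hcon
    push_neg at hcon
    have hζ₁pos : 0 < ((starRingEnd ℂ) η * (ζ₁ - c)).re :=
      lt_of_le_of_ne hcon (Ne.symm (hcap ζ₁ hζ₁S hζ₁K).2)
    obtain ⟨hre₁, him₁⟩ := hcoord ζ₁ hζ₁S hζ₁K
    obtain ⟨hre₂, him₂⟩ := hcoord ζ₂ hζ₂S hζ₂K
    have hcos₁ : 0 < Real.cos (β + G ζ₁) := by
      rw [hre₁] at hζ₁pos
      nlinarith
    have hcos₂ : Real.cos (β + G ζ₂) < 0 := by
      rw [hre₂] at hζ₂neg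
      nlinarith
    have hsin₁ : |Real.sin (β + G ζ₁)| < Real.sin μ := by
      have h5 := (hcap ζ₁ hζ₁S hζ₁K).1
      rw [him₁, abs_mul, abs_of_pos hρ] at h5
      exact lt_of_mul_lt_mul_left h5 hρ.le
    have hsin₂ : |Real.sin (β + G ζ₂)| < Real.sin μ := by
      have h5 := (hcap ζ₂ hζ₂S hζ₂K).1
      rw [him₂, abs_mul, abs_of_pos hρ] at h5
      exact lt_of_mul_lt_mul_left h5 hρ.le
    obtain ⟨k₁, hk₁⟩ := near_even_of_cos_pos hμ0 hμ2.le hsin₁ hcos₁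
    obtain ⟨k₂, hk₂⟩ := near_odd_of_cos_neg hμ0 hμ2.le hsin₂ hcos₂
    refine angle_contra hμ0 hμ2 hu0 hW2 hWu (hGb ζ₁ hζ₁S hζ₁K) (hGb ζ₂ hζ₂S hζ₂K)
      (j := k₁ - k₂) ?_
    rw [abs_lt] at *
    obtain ⟨ha1, ha2⟩ := hk₁
    obtain ⟨hb1, hb2⟩ := hk₂
    push_cast
    ring_nf at ha1 ha2 hb1 hb2 ⊢
    constructor <;> linarith


set_option maxHeartbeats 1600000 in
/-- the set of bad radii, where some connected component of
`∂B_r(x₀) \ S` is longer than `r(π + 2 arcsin(εr₁/r))`, is contained in an interval of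
length at most `2εr₁`. -/
theorem bad_radii_in_small_interval
    (S : Set E2) (hScl : IsClosed S) (harc : ArcConnected S)
    (x₀ : E2) (hx₀ : x₀ ∈ S)
    (ε r₀ r₁ : ℝ) (hε0 : 0 < ε) (hε : ε ≤ 1/10)
    (h1 : 2 * r₁ * ε < r₀) (h2 : r₀ < r₁) (h3 : r₁ < Metric.diam S / 2)
    (hβ : flatnessAnn S x₀ r₁ r₀ ≤ ε) :
    ∃ a b : ℝ, b - a ≤ 2 * ε * r₁ ∧
      { r ∈ Set.Icc r₀ r₁ | ∃ y ∈ Metric.sphere x₀ r \ S,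
          ENNReal.ofReal (r * (Real.pi + 2 * Real.arcsin (ε * r₁ / r))) <
            μH[1] (connectedComponentIn (Metric.sphere x₀ r \ S) y) }
        ⊆ Set.Icc a b := by
  classical
  have hπ := Real.pi_pos
  have hr₁ : 0 < r₁ := by nlinarith
  have hr₀ : 0 < r₀ := by nlinarith
  set A := { r ∈ Set.Icc r₀ r₁ | ∃ y ∈ Metric.sphere x₀ r \ S,
          ENNReal.ofReal (r * (Real.pi + 2 * Real.arcsin (ε * r₁ / r))) <
            μH[1] (connectedComponentIn (Metric.sphere x₀ r \ S) y) } with hA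
  -- a far point of S
  have hzstar : ∃ z ∈ S, r₁ < dist z x₀ := by
    by_contra hcon2
    push_neg at hcon2
    have hdiam : Metric.diam S ≤ 2*r₁ := by
      apply Metric.diam_le_of_forall_dist_le (by linarith)
      intro x hx y hy
      calc dist x y ≤ dist x x₀ + dist x₀ y := dist_triangle _ _ _
        _ ≤ r₁ + r₁ := by
            have h5 := hcon2 x hx
            have h6 := hcon2 y hy
            rw [dist_comm x₀ y]
            linarith
        _ = 2*r₁ := by ring
    linarith
  obtain ⟨zs, hzsS, hzs⟩ := hzstar
  -- S crosses every sphere of radius at most r₁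
  have cross : ∀ ρ : ℝ, 0 ≤ ρ → ρ ≤ r₁ → ∃ z ∈ S, dist z x₀ = ρ := by
    intro ρ h0ρ hρ1
    have hne : x₀ ≠ zs := by
      intro hh; rw [← hh, dist_self] at hzs; linarith
    obtain ⟨γ, hγc, _, hγ0, hγ1, hγm⟩ := harc x₀ hx₀ zs hzsS hne
    have hhc : ContinuousOn (fun t => dist (γ t) x₀) (Icc 0 1) := (continuous_id.dist continuous_const).comp_continuousOn hγc
    have hmem : ρ ∈ (fun t => dist (γ t) x₀) '' Icc 0 1 := by
      apply intermediate_value_Icc zero_le_one hhc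
      constructor
      · show dist (γ 0) x₀ ≤ ρ
        rw [hγ0, dist_self]; exact h0ρ
      · show ρ ≤ dist (γ 1) x₀
        rw [hγ1]; linarith
    obtain ⟨t, ht, hteq⟩ := hmem
    exact ⟨γ t, hγm ht, hteq⟩
  -- the key two-radii estimate
  have key : ∀ r ∈ A, ∀ r' ∈ A, r ≤ r' → r' - r ≤ 2*ε*r₁ := by
    intro r hrA r' hr'A hle
    by_contra hcon
    push_neg at hcon
    have hrA' := hrA
    have hr'A' := hr'A
    rw [hA] at hrA' hr'A'
    simp only [Set.mem_setOf_eq, Set.mem_Icc] at hrA' hr'A'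
    obtain ⟨⟨hrl, hru⟩, y1, hy1, hm1⟩ := hrA'
    obtain ⟨⟨hr'l, hr'u⟩, y2, hy2, hm2⟩ := hr'A'
    have hrpos : 0 < r := lt_of_lt_of_le hr₀ hrl
    have hr'pos : 0 < r' := lt_of_lt_of_le hr₀ hr'l
    have hrr' : r < r' := by nlinarith
    -- choice of a slightly larger ε' = ε + δ
    have tendaux : ∀ (L : ℝ) (F : ℝ → ℝ), Continuous F → F 0 < L →
        ∀ᶠ δ in nhdsWithin (0:ℝ) (Set.Ioi 0), F δ < L := by
      intro L F hF hFL
      exact ((hF.tendsto 0).eventually_lt_const hFL).filter_mono nhdsWithin_le_nhds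
    have hevm : ∀ (ρ : ℝ), 0 < ρ → ∀ (X : ℝ≥0∞),
        ENNReal.ofReal (ρ*(Real.pi + 2*Real.arcsin (ε*r₁/ρ))) < X →
        ∀ᶠ δ in nhdsWithin (0:ℝ) (Set.Ioi 0),
          ENNReal.ofReal (ρ*(Real.pi + 2*Real.arcsin ((ε+δ)*r₁/ρ))) < X := by
      intro ρ hρ X hX
      have hnn : ∀ y : ℝ, 0 ≤ ρ*(Real.pi + 2*Real.arcsin y) := by
        intro y
        nlinarith [Real.neg_pi_div_two_le_arcsin y]
      rcases eq_or_ne X ⊤ with hT | hT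
      · filter_upwards with δ
        rw [hT]
        exact ENNReal.ofReal_lt_top
      · have hlt : ρ*(Real.pi + 2*Real.arcsin (ε*r₁/ρ)) < X.toReal :=
          (ENNReal.ofReal_lt_iff_lt_toReal (hnn _) hT).mp hX
        have hcF : Continuous (fun δ : ℝ => ρ*(Real.pi + 2*Real.arcsin ((ε+δ)*r₁/ρ))) := by
          apply continuous_const.mul
          apply continuous_const.add
          exact continuous_const.mul (Real.continuous_arcsin.comp (by fun_prop))
        have hev := tendaux X.toReal _ hcF (by simpa using hlt)
        refine hev.mono (fun δ hδ => ?_)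
        exact (ENNReal.ofReal_lt_iff_lt_toReal (hnn _) hT).mpr hδ
    have hev1 := tendaux r₀ (fun δ => 2*(ε+δ)*r₁) (by fun_prop)
      (by show 2*(ε+(0:ℝ))*r₁ < r₀; nlinarith)
    have hev2 := tendaux (r' - r) (fun δ => 2*(ε+δ)*r₁) (by fun_prop)
      (by show 2*(ε+(0:ℝ))*r₁ < r' - r; nlinarith)
    have hallev := ((hev1.and hev2).and ((hevm r hrpos _ hm1).and (hevm r' hr'pos _ hm2))).and
      eventually_mem_nhdsWithin
    obtain ⟨δ, ⟨⟨hδ1, hδ2⟩, ⟨hδ3, hδ4⟩⟩, hδpos⟩ := hallev.exists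
    rw [Set.mem_Ioi] at hδpos
    have hδ1' : 2*(ε+δ)*r₁ < r₀ := hδ1
    have hδ2' : 2*(ε+δ)*r₁ < r' - r := hδ2
    set ε' := ε + δ with hε'd
    have hε'pos : 0 < ε' := by rw [hε'd]; linarith
    have hepr : 0 < ε' * r₁ := mul_pos hε'pos hr₁
    -- the approximating line
    set Θ := Complex.orthonormalBasisOneI.repr with hΘ
    have hflat : ∃ v : E2, v ≠ 0 ∧
        Metric.hausdorffDist ((S ∩ closure (ball x₀ r₁)) \ ball x₀ r₀)
          ((lineThru x₀ v ∩ closure (ball x₀ r₁)) \ ball x₀ r₀) < ε' * r₁ := by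
      have hne2 : { b | ∃ v : E2, v ≠ 0 ∧
          b = Metric.hausdorffDist ((S ∩ closure (ball x₀ r₁)) \ ball x₀ r₀)
            ((lineThru x₀ v ∩ closure (ball x₀ r₁)) \ ball x₀ r₀) / r₁ }.Nonempty := by
        refine ⟨_, Θ 1, ?_, rfl⟩
        intro hh
        have h5 : ‖Θ (1:ℂ)‖ = 0 := by rw [hh, norm_zero]
        rw [Θ.norm_map] at h5
        norm_num at h5
      have hbdd2 : BddBelow { b | ∃ v : E2, v ≠ 0 ∧
          b = Metric.hausdorffDist ((S ∩ closure (ball x₀ r₁)) \ ball x₀ r₀)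
            ((lineThru x₀ v ∩ closure (ball x₀ r₁)) \ ball x₀ r₀) / r₁ } := by
        refine ⟨0, ?_⟩
        rintro b ⟨v, hv, rfl⟩
        exact div_nonneg Metric.hausdorffDist_nonneg hr₁.le
      have hlt : flatnessAnn S x₀ r₁ r₀ < ε + δ := lt_of_le_of_lt hβ (by linarith)
      rw [flatnessAnn] at hlt
      obtain ⟨b, ⟨v, hv, rfl⟩, hblt⟩ := (csInf_lt_iff hbdd2 hne2).mp hlt
      rw [div_lt_iff₀ hr₁] at hblt
      exact ⟨v, hv, hblt⟩
    obtain ⟨v, hv, hdH⟩ := hflat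
    set e : E2 := ‖v‖⁻¹ • v with he_def
    have he : ‖e‖ = 1 := norm_smul_inv_norm hv
    have hclos : closure (ball x₀ r₁) = closedBall x₀ r₁ := closure_ball x₀ (ne_of_gt hr₁)
    set Ann := (S ∩ closure (ball x₀ r₁)) \ ball x₀ r₀ with hAnnd
    set L := (lineThru x₀ v ∩ closure (ball x₀ r₁)) \ ball x₀ r₀ with hLd
    have hLmem : ∀ t : ℝ, r₀ ≤ |t| → |t| ≤ r₁ → x₀ + t • e ∈ L := by
      intro t h1t h2t
      have hdist : dist (x₀ + t • e) x₀ = |t| := by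
        rw [dist_eq_norm, add_sub_cancel_left, norm_smul, he, mul_one]
        rfl
      refine ⟨⟨⟨t * ‖v‖⁻¹, ?_⟩, ?_⟩, ?_⟩
      · rw [he_def, smul_smul]
      · rw [hclos, mem_closedBall, hdist]; exact h2t
      · rw [mem_ball, hdist]; exact not_lt.mpr h1t
    have hAnnNe : Ann.Nonempty := by
      obtain ⟨z, hzS, hz⟩ := cross r₀ hr₀.le h2.le
      refine ⟨z, ⟨hzS, ?_⟩, ?_⟩
      · rw [hclos, mem_closedBall, hz]; linarith
      · rw [mem_ball, hz]; exact lt_irrefl _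
    have hLNe : L.Nonempty :=
      ⟨x₀ + r₁ • e, hLmem r₁ (by rw [abs_of_pos hr₁]; linarith) (by rw [abs_of_pos hr₁])⟩
    have hbAnn : Bornology.IsBounded Ann := by
      apply (Metric.isBounded_closedBall (x := x₀) (r := r₁)).subset
      intro z hz
      rw [← hclos]
      exact hz.1.2
    have hbL : Bornology.IsBounded L := by
      apply (Metric.isBounded_closedBall (x := x₀) (r := r₁)).subset
      intro z hz
      rw [← hclos]
      exact hz.1.2
    have hfin := Metric.hausdorffEdist_ne_top_of_nonempty_of_bounded hAnnNe hLNe hbAnn hbL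
    -- complex coordinates
    set ψ := Θ.symm with hψd
    set c : ℂ := ψ x₀ with hcd
    set η : ℂ := ψ e with hηd
    have hψn : ∀ z : E2, ‖ψ z - c‖ = dist z x₀ := by
      intro z
      rw [hcd, ← map_sub, ψ.norm_map, ← dist_eq_norm]
    have hηabs : ‖η‖ = 1 := by
      rw [hηd, ψ.norm_map, he]
    have hnormsq : ((starRingEnd ℂ) η) * η = 1 := by
      have h5 : Complex.normSq η = 1 := by
        rw [Complex.normSq_eq_norm_sq, hηabs]; norm_num
      rw [← Complex.normSq_eq_conj_mul_self, h5, Complex.ofReal_one]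
    set sfn : E2 → ℝ := fun z => ((starRingEnd ℂ) η * (ψ z - c)).re with hsfnd
    have hkey2 : ∀ (z : E2) (t : ℝ),
        ‖(starRingEnd ℂ) η * (ψ z - c) - (t:ℂ)‖ = dist z (x₀ + t • e) := by
      intro z t
      have h5 : (starRingEnd ℂ) η * (ψ z - c) - (t:ℂ)
          = (starRingEnd ℂ) η * (ψ z - c - (t:ℂ)*η) := by
        calc (starRingEnd ℂ) η * (ψ z - c) - (t:ℂ)
            = (starRingEnd ℂ) η * (ψ z - c) - (t:ℂ) * ((starRingEnd ℂ) η * η) := by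
              rw [hnormsq, mul_one]
          _ = (starRingEnd ℂ) η * (ψ z - c - (t:ℂ)*η) := by ring
      have h6 : ψ (z - (x₀ + t • e)) = ψ z - c - (t:ℂ)*η := by
        rw [map_sub, map_add, _root_.map_smul, ← hcd, ← hηd, Complex.real_smul]
        ring
      rw [h5, norm_mul, Complex.norm_conj, hηabs, one_mul, ← h6,
        ψ.norm_map, ← dist_eq_norm]
    have hsdiff : ∀ (z : E2) (t : ℝ), |sfn z - t| ≤ dist z (x₀ + t • e) := by
      intro z t
      have h5 : sfn z - t = ((starRingEnd ℂ) η * (ψ z - c) - (t:ℂ)).re := by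
        simp [hsfnd]
      rw [h5, ← hkey2 z t]
      exact Complex.abs_re_le_norm _
    have him : ∀ (z : E2) (t : ℝ), |((starRingEnd ℂ) η * (ψ z - c)).im| ≤ dist z (x₀ + t • e) := by
      intro z t
      have h5 : ((starRingEnd ℂ) η * (ψ z - c)).im
          = ((starRingEnd ℂ) η * (ψ z - c) - (t:ℂ)).im := by simp
      rw [h5, ← hkey2 z t]
      exact Complex.abs_im_le_norm _
    -- the tube facts
    have hF4 : ∀ z ∈ S, r₀ ≤ dist z x₀ → dist z x₀ ≤ r₁ →
        ∃ t : ℝ, r₀ ≤ |t| ∧ |t| ≤ r₁ ∧ dist z (x₀ + t • e) < ε' * r₁ := by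
      intro z hzS hz1 hz2
      have hzAnn : z ∈ Ann := ⟨⟨hzS, by rw [hclos, mem_closedBall]; exact hz2⟩,
        by rw [mem_ball]; exact not_lt.mpr hz1⟩
      obtain ⟨w, hwL, hd⟩ := Metric.exists_dist_lt_of_hausdorffDist_lt hzAnn hdH hfin
      obtain ⟨⟨⟨t0, ht0⟩, hw1⟩, hw2⟩ := hwL
      have hwd : dist w x₀ = |t0| * ‖v‖ := by
        rw [ht0, dist_eq_norm, add_sub_cancel_left, norm_smul]
        rfl
      refine ⟨t0 * ‖v‖, ?_, ?_, ?_⟩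
      · rw [abs_mul, abs_of_nonneg (norm_nonneg v), ← hwd]
        rw [mem_ball, not_lt] at hw2
        exact hw2
      · rw [abs_mul, abs_of_nonneg (norm_nonneg v), ← hwd]
        rw [hclos, mem_closedBall] at hw1
        exact hw1
      · have hsc : t0 * ‖v‖ * ‖v‖⁻¹ = t0 := by
          rw [mul_assoc, mul_inv_cancel₀ (norm_ne_zero_iff.mpr hv), mul_one]
        have hwe : w = x₀ + (t0 * ‖v‖) • e := by
          rw [ht0, he_def, smul_smul, hsc]
        rw [hwe] at hd
        exact hd
    have hF5 : ∀ t : ℝ, r₀ ≤ |t| → |t| ≤ r₁ →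
        ∃ z ∈ S, r₀ ≤ dist z x₀ ∧ dist z x₀ ≤ r₁ ∧ dist z (x₀ + t • e) < ε' * r₁ := by
      intro t h1t h2t
      obtain ⟨z, hzAnn, hd⟩ := Metric.exists_dist_lt_of_hausdorffDist_lt' (hLmem t h1t h2t) hdH hfin
      refine ⟨z, hzAnn.1.1, ?_, ?_, hd⟩
      · have h5 := hzAnn.2
        rw [mem_ball, not_lt] at h5
        exact h5
      · have h5 := hzAnn.1.2
        rw [hclos, mem_closedBall] at h5
        exact h5
    have hsnz : ∀ z ∈ S, r₀ ≤ dist z x₀ → dist z x₀ ≤ r₁ → sfn z ≠ 0 := by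
      intro z hz hd1 hd2 h0
      obtain ⟨t, ht1, ht2, ht3⟩ := hF4 z hz hd1 hd2
      have h5 := hsdiff z t
      rw [h0, zero_sub, abs_neg] at h5
      have h6 := h5.trans_lt ht3
      linarith
    -- one-sidedness at a bad radius
    have claimA : ∀ ρ : ℝ, r₀ ≤ ρ → ρ ≤ r₁ →
        ∀ Cs : Set E2, IsPreconnected Cs → (∀ z ∈ Cs, dist z x₀ = ρ ∧ z ∉ S) →
        ENNReal.ofReal (ρ*(Real.pi + 2*Real.arcsin (ε'*r₁/ρ))) < μH[1] Cs →
        ((∀ z ∈ S, dist z x₀ = ρ → 0 < sfn z) ∨ (∀ z ∈ S, dist z x₀ = ρ → sfn z < 0)) := by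
      intro ρ hρ1 hρ2 Cs hCpre hCprop hCμ
      have hρpos : 0 < ρ := lt_of_lt_of_le hr₀ hρ1
      set lam := ε'*r₁/ρ with hlam
      have hlampos : 0 < lam := by rw [hlam]; positivity
      have hlamlt : lam < 1 := by
        rw [hlam, div_lt_one hρpos]
        linarith
      set μ := Real.arcsin lam with hμd
      have hμpos : 0 < μ := Real.arcsin_pos.mpr hlampos
      have hμlt : μ < Real.pi/2 := Real.arcsin_lt_pi_div_two.mpr hlamlt
      have hsinμ : Real.sin μ = lam := Real.sin_arcsin (by linarith) hlamlt.le
      obtain ⟨p0, hp0S, hp0d⟩ := cross ρ hρpos.le hρ2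
      have hres := circle_confine c η hηabs hρpos hμpos hμlt (ψ '' S) (ψ '' Cs)
        (p := ψ p0) ⟨p0, hp0S, rfl⟩ (by rw [hψn]; exact hp0d)
        (hCpre.image ψ ψ.continuous.continuousOn)
        (by rintro _ ⟨z, hz, rfl⟩; rw [hψn]; exact (hCprop z hz).1)
        (by rintro _ ⟨z, hz, rfl⟩ ⟨z', hz', hzz'⟩; exact (hCprop z hz).2 (ψ.injective hzz' ▸ hz'))
        (by rw [Isometry.hausdorffMeasure_image ψ.isometry (Or.inl zero_le_one) Cs]; exact hCμ)
        ?caps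
      case caps =>
        rintro _ ⟨z, hzS, rfl⟩ hzK
        rw [hψn] at hzK
        obtain ⟨t, ht1, ht2, ht3⟩ := hF4 z hzS (hzK ▸ hρ1) (hzK ▸ hρ2)
        constructor
        · have h5 := (him z t).trans_lt ht3
          have h6 : ε' * r₁ = ρ * Real.sin μ := by
            rw [hsinμ, hlam]
            field_simp
          rw [← h6]
          exact h5
        · exact hsnz z hzS (hzK ▸ hρ1) (hzK ▸ hρ2)
      rcases hres with h | h
      · exact Or.inl (fun z hz hd => h (ψ z) ⟨z, hz, rfl⟩ (by rw [hψn]; exact hd))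
      · exact Or.inr (fun z hz hd => h (ψ z) ⟨z, hz, rfl⟩ (by rw [hψn]; exact hd))
    -- the two dichotomies
    have hDr := claimA r hrl hru (connectedComponentIn (Metric.sphere x₀ r \ S) y1)
      (isConnected_connectedComponentIn_iff.mpr hy1).isPreconnected
      (fun z hz => by
        have h5 := connectedComponentIn_subset _ _ hz
        exact ⟨by simpa [dist_eq_norm] using h5.1, h5.2⟩)
      hδ3
    have hDr' := claimA r' hr'l hr'u (connectedComponentIn (Metric.sphere x₀ r' \ S) y2)
      (isConnected_connectedComponentIn_iff.mpr hy2).isPreconnected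
      (fun z hz => by
        have h5 := connectedComponentIn_subset _ _ hz
        exact ⟨by simpa [dist_eq_norm] using h5.1, h5.2⟩)
      hδ4
    -- continuity of the side function
    have hcont_sfn : Continuous sfn := by
      rw [hsfnd]
      exact Complex.continuous_re.comp (continuous_const.mul (ψ.continuous.sub continuous_const))
    -- crossing arguments
    have crossDown : ∀ z ∈ S, r < dist z x₀ → dist z x₀ < r' →
        ∃ z₁ ∈ S, (dist z₁ x₀ = r ∨ dist z₁ x₀ = r') ∧ (0 < sfn z ↔ 0 < sfn z₁) := by
      intro z hzS hd1 hd2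
      have hne : z ≠ x₀ := by
        intro hh
        rw [hh, dist_self] at hd1
        linarith
      obtain ⟨γ, hγc, _, hγ0, hγ1, hγm⟩ := harc z hzS x₀ hx₀ hne
      have hhc : ContinuousOn (fun t => dist (γ t) x₀) (Icc 0 1) := (continuous_id.dist continuous_const).comp_continuousOn hγc
      obtain ⟨T, hT01, hTab, hTmem⟩ := exit_first hhc
        (by show dist (γ 0) x₀ ∈ Ioo r r'; rw [hγ0]; exact ⟨hd1, hd2⟩)
        (by show dist (γ 1) x₀ ∉ Ioo r r'; rw [hγ1, dist_self]; rintro ⟨hh, -⟩; linarith)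
      have hsig : (0 < sfn (γ 0) ↔ 0 < sfn (γ T)) := by
        apply sign_const (φ := fun t => sfn (γ t)) (a := 0) (b := T) hT01.1
          (hcont_sfn.comp_continuousOn (hγc.mono (fun t ht => ⟨ht.1, le_trans ht.2 hT01.2⟩)))
        intro t ht
        have h5 := hTmem t ht
        exact hsnz (γ t) (hγm ⟨ht.1, le_trans ht.2 hT01.2⟩) (le_trans hrl h5.1) (le_trans h5.2 hr'u)
      refine ⟨γ T, hγm hT01, hTab, ?_⟩
      rw [← hγ0]
      exact hsig
    have crossUp : ∀ z ∈ S, r < dist z x₀ → dist z x₀ < r' →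
        ((∃ z₁ ∈ S, dist z₁ x₀ = r ∧ ∃ z₂ ∈ S, dist z₂ x₀ = r' ∧ (0 < sfn z₁ ↔ 0 < sfn z₂)) ∨
         (∃ z₂ ∈ S, dist z₂ x₀ = r' ∧ (0 < sfn z ↔ 0 < sfn z₂))) := by
      intro z hzS hd1 hd2
      have hne : z ≠ zs := by
        intro hh
        rw [hh] at hd2
        linarith
      obtain ⟨γ, hγc, _, hγ0, hγ1, hγm⟩ := harc z hzS zs hzsS hne
      have hhc : ContinuousOn (fun t => dist (γ t) x₀) (Icc 0 1) := (continuous_id.dist continuous_const).comp_continuousOn hγc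
      obtain ⟨T₁, T₂, h01, h12, h21, hb2, ha1, hmem⟩ := exit_two hrr' hhc
        (by show dist (γ 0) x₀ ∈ Ioo r r'; rw [hγ0]; exact ⟨hd1, hd2⟩)
        (by show r' ≤ dist (γ 1) x₀; rw [hγ1]; linarith)
      have hT₁I : T₁ ∈ Icc (0:ℝ) 1 := ⟨h01, le_trans h12 h21⟩
      have hT₂I : T₂ ∈ Icc (0:ℝ) 1 := ⟨le_trans h01 h12, h21⟩
      have hsig : (0 < sfn (γ T₁) ↔ 0 < sfn (γ T₂)) := by
        apply sign_const (φ := fun t => sfn (γ t)) (a := T₁) (b := T₂) h12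
          (hcont_sfn.comp_continuousOn (hγc.mono (fun t ht =>
            ⟨le_trans h01 ht.1, le_trans ht.2 h21⟩)))
        intro t ht
        have h5 := hmem t ht
        exact hsnz (γ t) (hγm ⟨le_trans h01 ht.1, le_trans ht.2 h21⟩)
          (le_trans hrl h5.1) (le_trans h5.2 hr'u)
      rcases ha1 with haa | h00
      · exact Or.inl ⟨γ T₁, hγm hT₁I, haa, γ T₂, hγm hT₂I, hb2, hsig⟩
      · right
        refine ⟨γ T₂, hγm hT₂I, hb2, ?_⟩
        rw [h00, hγ0] at hsig
        exact hsig
    -- the two witnesses in the middle annulus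
    set m := (r + r')/2 with hmd
    have hmpos : 0 < m := by rw [hmd]; linarith
    have hmabs : |m| = m := abs_of_pos hmpos
    have hm1 : r₀ ≤ |m| := by rw [hmabs, hmd]; linarith
    have hm2 : |m| ≤ r₁ := by rw [hmabs, hmd]; linarith
    obtain ⟨zp, hzpS, hzp1, hzp2, hzp3⟩ := hF5 m hm1 hm2
    obtain ⟨zn, hznS, hzn1, hzn2, hzn3⟩ := hF5 (-m) (by rw [abs_neg]; exact hm1)
      (by rw [abs_neg]; exact hm2)
    have hdp : dist (x₀ + m • e) x₀ = m := by
      rw [dist_eq_norm, add_sub_cancel_left, norm_smul, he, mul_one]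
      exact hmabs
    have hdn : dist (x₀ + (-m) • e) x₀ = m := by
      rw [dist_eq_norm, add_sub_cancel_left, norm_smul, he, mul_one, norm_neg]
      exact hmabs
    have hzpd : r < dist zp x₀ ∧ dist zp x₀ < r' := by
      have h5 := abs_dist_sub_le zp (x₀ + m • e) x₀
      rw [hdp] at h5
      have h7 := h5.trans_lt hzp3
      rw [abs_lt] at h7
      constructor <;> linarith
    have hznd : r < dist zn x₀ ∧ dist zn x₀ < r' := by
      have h5 := abs_dist_sub_le zn (x₀ + (-m) • e) x₀
      rw [hdn] at h5
      have h7 := h5.trans_lt hzn3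
      rw [abs_lt] at h7
      constructor <;> linarith
    have hzps : 0 < sfn zp := by
      have h5 := (hsdiff zp m).trans_lt hzp3
      rw [abs_lt] at h5
      linarith [h5.1]
    have hzns : sfn zn < 0 := by
      have h5 := (hsdiff zn (-m)).trans_lt hzn3
      rw [abs_lt] at h5
      linarith [h5.2]
    -- final contradiction
    rcases hDr with hPR | hNR <;> rcases hDr' with hPR' | hNR'
    · obtain ⟨z₁, hz₁S, hz₁d, hz₁iff⟩ := crossDown zn hznS hznd.1 hznd.2
      have h6 : ¬ (0 < sfn z₁) := fun hh => absurd (hz₁iff.mpr hh) (by linarith)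
      rcases hz₁d with h | h
      · exact h6 (hPR z₁ hz₁S h)
      · exact h6 (hPR' z₁ hz₁S h)
    · rcases crossUp zp hzpS hzpd.1 hzpd.2 with
        ⟨z₁, hz₁S, he₁, z₂, hz₂S, he₂, hiff⟩ | ⟨z₂, hz₂S, he₂, hiff⟩
      · have h5 := hiff.mp (hPR z₁ hz₁S he₁)
        linarith [hNR' z₂ hz₂S he₂]
      · have h5 := hiff.mp hzps
        linarith [hNR' z₂ hz₂S he₂]
    · rcases crossUp zn hznS hznd.1 hznd.2 with
        ⟨z₁, hz₁S, he₁, z₂, hz₂S, he₂, hiff⟩ | ⟨z₂, hz₂S, he₂, hiff⟩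
      · have h5 := hiff.mpr (hPR' z₂ hz₂S he₂)
        linarith [hNR z₁ hz₁S he₁]
      · have h5 := hiff.mpr (hPR' z₂ hz₂S he₂)
        linarith
    · obtain ⟨z₁, hz₁S, hz₁d, hz₁iff⟩ := crossDown zp hzpS hzpd.1 hzpd.2
      have h5 := hz₁iff.mp hzps
      rcases hz₁d with h | h
      · linarith [hNR z₁ hz₁S h]
      · linarith [hNR' z₁ hz₁S h]
  -- conclude
  by_cases hABne : A.Nonempty
  · refine ⟨sInf A, sInf A + 2*ε*r₁, by linarith, ?_⟩
    intro ρ hρ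
    have hbdd : BddBelow A := ⟨r₀, fun x hx => hx.1.1⟩
    refine ⟨csInf_le hbdd hρ, ?_⟩
    have h5 : ρ - 2*ε*r₁ ≤ sInf A := by
      apply le_csInf hABne
      intro x hx
      rcases le_or_gt x ρ with h | h
      · have h6 := key x hx ρ hρ h
        linarith
      · nlinarith
    linarith
  · rw [Set.not_nonempty_iff_eq_empty] at hABne
    refine ⟨0, 0, by nlinarith, ?_⟩
    rw [hABne]
    exact Set.empty_subset _


end
end

section
/- Let x₀ ∈ ℝ², r > 0, and let Γ ⊆ cl(B_r(x₀)) be an arc (a homeomorphic image of [0,1]) whose two endpoints x₁, x₂ lie on ∂B_r(x₀). Assume β_Γ(x₀,r) ≤ 1/10 and that x₁ and x₂ lie on both sides, i.e. they belong to two different connected components of ∂B_r(x₀) ∩ { y : dist(y, P₀) ≤ β_Γ(x₀,r)·r }, where P₀ is a line through x₀ attaining the infimum in the definition of β_Γ(x₀,r). Then for every z ∈ Γ one has dist(z, [x₁,x₂])² ≤ 2·r·(H¹(Γ) − |x₂ − x₁|), where [x₁,x₂] denotes the line segment joining x₁ and x₂. -/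
open MeasureTheory Metric Set
open scoped ENNReal NNReal RealInnerProductSpace

noncomputable section

set_option maxHeartbeats 1000000

lemma dist_le_H1_of_preconnected {S : Set E2} (hS : IsPreconnected S)
    {a b : E2} (ha : a ∈ S) (hb : b ∈ S) :
    ENNReal.ofReal (dist a b) ≤ μH[1] S := by
  rcases eq_or_ne a b with rfl | hab
  · simp
  set u : E2 := ‖b - a‖⁻¹ • (b - a) with hu_def
  have hba : b - a ≠ 0 := sub_ne_zero.2 hab.symm
  have hu : ‖u‖ = 1 := by
    rw [hu_def, norm_smul, norm_inv, norm_norm]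
    field_simp [norm_ne_zero_iff.2 hba]
  set f : E2 → ℝ := fun y => ⟪u, y⟫ with hf_def
  have hf : LipschitzWith 1 f := by
    apply LipschitzWith.of_dist_le_mul
    intro x y
    have : f x - f y = ⟪u, x - y⟫ := (inner_sub_right _ _ _).symm
    rw [Real.dist_eq, dist_eq_norm, this, NNReal.coe_one, one_mul]
    calc |⟪u, x - y⟫| ≤ ‖u‖ * ‖x - y‖ := abs_real_inner_le_norm _ _
    _ = ‖x - y‖ := by rw [hu, one_mul]
  have himg : μH[1] (f '' S) ≤ μH[1] S := by
    simpa using hf.hausdorffMeasure_image_le (d := 1) zero_le_one S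
  have hfc : IsPreconnected (f '' S) := hS.image f (hf.continuous.continuousOn)
  have hoc : (f '' S).OrdConnected := hfc.ordConnected
  have hfb : f b - f a = ‖b - a‖ := by
    have : f b - f a = ⟪u, b - a⟫ := (inner_sub_right _ _ _).symm
    rw [this, hu_def, real_inner_smul_left, real_inner_self_eq_norm_sq]
    rw [sq]
    field_simp
  have hsub : Icc (f a) (f b) ⊆ f '' S := hoc.out (mem_image_of_mem f ha) (mem_image_of_mem f hb)
  calc ENNReal.ofReal (dist a b) = volume (Icc (f a) (f b)) := by
        rw [Real.volume_Icc, hfb, dist_eq_norm, norm_sub_rev]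
    _ = μH[1] (Icc (f a) (f b)) := by rw [MeasureTheory.hausdorffMeasure_real]
    _ ≤ μH[1] (f '' S) := measure_mono hsub
    _ ≤ μH[1] S := himg

lemma sum_dist_le_H1 (γ : ℝ → E2) (hcont : ContinuousOn γ (Set.Icc 0 1))
    (hinj : Set.InjOn γ (Set.Icc 0 1)) {t : ℝ} (ht : t ∈ Set.Icc (0:ℝ) 1) :
    ENNReal.ofReal (dist (γ 0) (γ t) + dist (γ t) (γ 1)) ≤ μH[1] (γ '' Set.Icc 0 1) := by
  obtain ⟨ht0, ht1⟩ := ht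
  have hIcc1 : Set.Icc (0:ℝ) t ⊆ Set.Icc 0 1 := Set.Icc_subset_Icc le_rfl ht1
  have hIcc2 : Set.Icc t 1 ⊆ Set.Icc 0 1 := Set.Icc_subset_Icc ht0 le_rfl
  set S₁ := γ '' Set.Icc 0 t with hS₁
  set S₂ := γ '' Set.Icc t 1 with hS₂
  have hc1 : IsCompact S₁ := (isCompact_Icc).image_of_continuousOn (hcont.mono hIcc1)
  have hc2 : IsCompact S₂ := (isCompact_Icc).image_of_continuousOn (hcont.mono hIcc2)
  have hp1 : IsPreconnected S₁ :=
    (isPreconnected_Icc).image γ (hcont.mono hIcc1)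
  have hp2 : IsPreconnected S₂ :=
    (isPreconnected_Icc).image γ (hcont.mono hIcc2)
  have hunion : γ '' Set.Icc 0 1 = S₁ ∪ S₂ := by
    rw [hS₁, hS₂, ← Set.image_union, Set.Icc_union_Icc_eq_Icc ht0 ht1]
  have hinter : S₁ ∩ S₂ ⊆ {γ t} := by
    rintro x ⟨⟨s, hs, rfl⟩, ⟨s', hs', hss'⟩⟩
    have hsmem : s ∈ Set.Icc (0:ℝ) 1 := hIcc1 hs
    have hs'mem : s' ∈ Set.Icc (0:ℝ) 1 := hIcc2 hs'
    have : s' = s := hinj hs'mem hsmem hss'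
    subst this
    have : s' = t := le_antisymm hs.2 hs'.1
    rw [this]
    exact Set.mem_singleton _
  have hm2 : μH[1] S₂ ≤ μH[1] (S₂ \ S₁) := by
    have : S₂ ⊆ (S₂ \ S₁) ∪ {γ t} := by
      intro x hx
      by_cases hx1 : x ∈ S₁
      · exact Or.inr (hinter ⟨hx1, hx⟩)
      · exact Or.inl ⟨hx, hx1⟩
    calc μH[1] S₂ ≤ μH[1] ((S₂ \ S₁) ∪ {γ t}) := measure_mono this
      _ ≤ μH[1] (S₂ \ S₁) + μH[1] {γ t} := measure_union_le _ _
      _ = μH[1] (S₂ \ S₁) := by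
          haveI := MeasureTheory.Measure.noAtoms_hausdorff E2 one_pos
          rw [measure_singleton, add_zero]
  have hsplit : μH[1] (γ '' Set.Icc 0 1) = μH[1] S₁ + μH[1] (S₂ \ S₁) := by
    have : S₁ ∪ S₂ = S₁ ∪ (S₂ \ S₁) := (Set.union_diff_self).symm
    rw [hunion, this]
    exact measure_union disjoint_sdiff_right (hc2.measurableSet.diff hc1.measurableSet)
  have h1 : ENNReal.ofReal (dist (γ 0) (γ t)) ≤ μH[1] S₁ :=
    dist_le_H1_of_preconnected hp1 (Set.mem_image_of_mem γ ⟨le_rfl, ht0⟩)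
      (Set.mem_image_of_mem γ ⟨ht0, le_rfl⟩)
  have h2 : ENNReal.ofReal (dist (γ t) (γ 1)) ≤ μH[1] (S₂ \ S₁) :=
    le_trans (dist_le_H1_of_preconnected hp2 (Set.mem_image_of_mem γ ⟨le_rfl, ht1⟩)
      (Set.mem_image_of_mem γ ⟨ht1, le_rfl⟩)) hm2
  calc ENNReal.ofReal (dist (γ 0) (γ t) + dist (γ t) (γ 1))
      ≤ ENNReal.ofReal (dist (γ 0) (γ t)) + ENNReal.ofReal (dist (γ t) (γ 1)) :=
        ENNReal.ofReal_add_le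
    _ ≤ μH[1] S₁ + μH[1] (S₂ \ S₁) := add_le_add h1 h2
    _ = μH[1] (γ '' Set.Icc 0 1) := hsplit.symm

lemma obtuse_ineq (c a D : ℝ) (hc : 0 ≤ c) (ha : 0 ≤ a) (hD : 0 ≤ D)
    (h : D^2 + a^2 ≤ c^2) : D^2 ≤ (c - a) * (D + 2*a) := by
  have hac : a ≤ c := le_of_pow_le_pow_left₀ two_ne_zero hc (by nlinarith)
  rcases le_total c (D + a) with h' | h'
  · nlinarith [mul_nonneg (sub_nonneg.2 hac) (sub_nonneg.2 h')]
  · nlinarith [mul_nonneg (sub_nonneg.2 (show a + D ≤ c by linarith))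
      (by positivity : (0:ℝ) ≤ D + 2*a), mul_nonneg ha hD]

lemma amhm_ineq (u v x y D r : ℝ) (hu : 0 < u) (hv : 0 < v) (hx : 0 < x) (hy : 0 < y)
    (h1 : D^2 ≤ u*x) (h2 : D^2 ≤ v*y) (hr : 0 < r) (hxy : x + y ≤ 8*r) :
    D^2 ≤ 2*r*(u+v) := by
  have hts : (D^2)^2 ≤ (u*y)*(v*x) := by
    calc (D^2)^2 = D^2 * D^2 := sq (D^2) ▸ rfl
      _ ≤ (u*x)*(v*y) := mul_le_mul h1 h2 (sq_nonneg D) (by positivity)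
      _ = (u*y)*(v*x) := by ring
  have h3 : 2*D^2 ≤ u*y + v*x := by
    nlinarith [sq_nonneg (u*y - v*x), mul_pos (mul_pos hu hy) (mul_pos hv hx),
      sq_nonneg D, mul_pos hu hy, mul_pos hv hx]
  have h4 : 4*D^2 ≤ (u+v)*(x+y) := by nlinarith
  nlinarith [mul_le_mul_of_nonneg_left hxy (by positivity : (0:ℝ) ≤ u+v)]

lemma key_real (x₀ : E2) (r : ℝ) (hr : 0 < r) (x₁ x₂ z : E2)
    (hz : dist z x₀ ≤ r) (h1 : dist x₁ x₀ ≤ r) (h2 : dist x₂ x₀ ≤ r) :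
    (Metric.infDist z (segment ℝ x₁ x₂))^2 ≤
      2*r*((dist x₁ z + dist z x₂) - dist x₂ x₁) := by
  set w : E2 := x₂ - x₁ with hw
  set L : ℝ := ‖w‖ with hL
  set s : ℝ := ⟪z - x₁, w⟫ / L^2 with hs
  set t : ℝ := max 0 (min 1 s) with ht
  set p : E2 := x₁ + t • w with hp
  have htc : (t = 0 ∧ s ≤ 0) ∨ (t = s ∧ 0 ≤ s ∧ s ≤ 1) ∨ (t = 1 ∧ 1 ≤ s) := by
    rcases le_total s 0 with h | h
    · exact Or.inl ⟨by rw [ht, min_eq_right (h.trans zero_le_one), max_eq_left h], h⟩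
    · rcases le_total s 1 with h' | h'
      · exact Or.inr (Or.inl ⟨by rw [ht, min_eq_right h', max_eq_right h], h, h'⟩)
      · exact Or.inr (Or.inr ⟨by rw [ht, min_eq_left h', max_eq_right zero_le_one], h'⟩)
  have ht0 : 0 ≤ t := le_max_left 0 _
  have ht1 : t ≤ 1 := by
    rcases htc with ⟨h, _⟩ | ⟨h, _, h'⟩ | ⟨h, _⟩ <;> rw [h] <;> linarith
  have hts : 0 ≤ t * (s - t) := by
    rcases htc with ⟨h, h'⟩ | ⟨h, _, _⟩ | ⟨h, h'⟩ <;> rw [h] <;> nlinarith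
  have hts' : (1 - t) * (s - t) ≤ 0 := by
    rcases htc with ⟨h, h'⟩ | ⟨h, _, _⟩ | ⟨h, h'⟩ <;> rw [h] <;> nlinarith
  have hinner : ⟪z - x₁, w⟫ = s * L^2 := by
    rcases eq_or_ne L 0 with hL0 | hL0
    · have : w = 0 := by rwa [hL, norm_eq_zero] at hL0
      simp [this, hL0]
    · rw [hs]; field_simp
  have hpw : ⟪z - p, w⟫ = (s - t) * L^2 := by
    have hzp : z - p = (z - x₁) - t • w := by rw [hp]; abel
    rw [hzp, inner_sub_left, real_inner_smul_left, hinner, hL,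
      real_inner_self_eq_norm_sq]
    ring
  have hpseg : p ∈ segment ℝ x₁ x₂ := by
    rw [segment_eq_image']
    exact ⟨t, ⟨ht0, ht1⟩, rfl⟩
  set D : ℝ := ‖z - p‖ with hD
  have hD0 : 0 ≤ D := norm_nonneg _
  set a : ℝ := t * L with ha
  set b : ℝ := (1 - t) * L with hb
  have hL0 : 0 ≤ L := norm_nonneg _
  have ha0 : 0 ≤ a := mul_nonneg ht0 hL0
  have hb0 : 0 ≤ b := mul_nonneg (by linarith) hL0
  have hab : a + b = L := by rw [ha, hb]; ring
  have hd1 : D^2 + a^2 ≤ (dist x₁ z)^2 := by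
    have hz1 : z - x₁ = (z - p) + t • w := by rw [hp]; abel
    have hexp := norm_add_sq_real (z - p) (t • w)
    rw [← hz1] at hexp
    have hip : ⟪z - p, t • w⟫ = t * ((s - t) * L^2) := by
      rw [real_inner_smul_right, hpw]
    have hnt : ‖t • w‖ = t * L := by
      rw [norm_smul, Real.norm_eq_abs, abs_of_nonneg ht0, hL]
    have hdz : dist x₁ z = ‖z - x₁‖ := by rw [dist_comm, dist_eq_norm]
    rw [hdz, hexp, hip, hnt, ha]
    nlinarith [hts, sq_nonneg L]
  have hd2 : D^2 + b^2 ≤ (dist z x₂)^2 := by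
    have hz2 : z - x₂ = (z - p) - (1 - t) • w := by rw [hp, hw]; module
    have hexp := norm_sub_sq_real (z - p) ((1 - t) • w)
    rw [← hz2] at hexp
    have hip : ⟪z - p, (1 - t) • w⟫ = (1 - t) * ((s - t) * L^2) := by
      rw [real_inner_smul_right, hpw]
    have hnt : ‖(1 - t) • w‖ = (1 - t) * L := by
      rw [norm_smul, Real.norm_eq_abs, abs_of_nonneg (by linarith : (0:ℝ) ≤ 1 - t), hL]
    have hdz : dist z x₂ = ‖z - x₂‖ := by rw [dist_eq_norm]
    rw [hdz, hexp, hip, hnt, hb]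
    nlinarith [hts', sq_nonneg L]
  have hDr : D ≤ 2 * r := by
    have hpball : dist p x₀ ≤ r := by
      have hcv : Convex ℝ (closedBall x₀ r) := convex_closedBall x₀ r
      have hseg : segment ℝ x₁ x₂ ⊆ closedBall x₀ r :=
        hcv.segment_subset (mem_closedBall.2 h1) (mem_closedBall.2 h2)
      exact mem_closedBall.1 (hseg hpseg)
    calc D = dist z p := by rw [hD, dist_eq_norm]
      _ ≤ dist z x₀ + dist x₀ p := dist_triangle _ _ _
      _ ≤ r + r := add_le_add hz (by rwa [dist_comm])
      _ = 2 * r := by ring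
  have hLr : L ≤ 2 * r := by
    have htr : dist x₂ x₁ ≤ dist x₂ x₀ + dist x₀ x₁ := dist_triangle _ _ _
    rw [dist_comm x₀ x₁] at htr
    rw [hL, hw, ← dist_eq_norm]
    linarith
  have hdD : Metric.infDist z (segment ℝ x₁ x₂) ≤ D := by
    rw [hD, ← dist_eq_norm]
    exact Metric.infDist_le_dist_of_mem hpseg
  have hdn : 0 ≤ Metric.infDist z (segment ℝ x₁ x₂) := Metric.infDist_nonneg
  have hLdist : dist x₂ x₁ = L := by rw [hL, hw, dist_eq_norm]
  set c : ℝ := dist x₁ z with hc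
  set e : ℝ := dist z x₂ with he
  have hc0 : 0 ≤ c := dist_nonneg
  have he0 : 0 ≤ e := dist_nonneg
  rw [hLdist]
  rcases eq_or_lt_of_le hD0 with hD0' | hD0'
  · -- D = 0 : infDist ≤ 0
    have hd0 : Metric.infDist z (segment ℝ x₁ x₂) = 0 :=
      le_antisymm (hD0' ▸ hdD) hdn
    rw [hd0]
    have hac : a ≤ c := le_of_pow_le_pow_left₀ two_ne_zero hc0 (by nlinarith)
    have hbe : b ≤ e := le_of_pow_le_pow_left₀ two_ne_zero he0 (by nlinarith)
    nlinarith
  · -- D > 0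
    have hca : D^2 ≤ (c - a) * (D + 2*a) := obtuse_ineq c a D hc0 ha0 hD0 hd1
    have heb : D^2 ≤ (e - b) * (D + 2*b) := obtuse_ineq e b D he0 hb0 hD0 hd2
    have hx : 0 < D + 2*a := by linarith
    have hy : 0 < D + 2*b := by linarith
    have hca0 : 0 < c - a := by nlinarith [sq_nonneg D]
    have heb0 : 0 < e - b := by nlinarith [sq_nonneg D]
    have hxy : (D + 2*a) + (D + 2*b) ≤ 8 * r := by
      have : 2*a + 2*b = 2*L := by linarith
      linarith
    have hmain : D^2 ≤ 2*r*((c - a) + (e - b)) :=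
      amhm_ineq (c - a) (e - b) (D + 2*a) (D + 2*b) D r hca0 heb0 hx hy hca heb hr hxy
    have hgoal : D^2 ≤ 2*r*(c + e - L) := by
      have : (c - a) + (e - b) = c + e - L := by rw [← hab]; ring
      rwa [this] at hmain
    calc (Metric.infDist z (segment ℝ x₁ x₂))^2 ≤ D^2 := pow_le_pow_left₀ hdn hdD 2
      _ ≤ 2*r*(c + e - L) := hgoal

/-- Pythagoras-type flatness estimate for an arc joining two points of the
sphere lying on both sides of an optimal line. -/
theorem arc_flatness_pythagoras
    (x₀ : E2) (r : ℝ) (hr : 0 < r)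
    (γ : ℝ → E2) (hcont : ContinuousOn γ (Set.Icc 0 1)) (hinj : Set.InjOn γ (Set.Icc 0 1))
    (Γ : Set E2) (hΓ : Γ = γ '' Set.Icc 0 1) (hΓsub : Γ ⊆ closure (ball x₀ r))
    (x₁ x₂ : E2) (hx₁ : x₁ = γ 0) (hx₂ : x₂ = γ 1)
    (hx₁s : x₁ ∈ Metric.sphere x₀ r) (hx₂s : x₂ ∈ Metric.sphere x₀ r)
    (hβ : flatness Γ x₀ r ≤ 1/10)
    (v : E2) (hv : v ≠ 0)
    (hopt : Metric.hausdorffDist (Γ ∩ closure (ball x₀ r))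
        (lineThru x₀ v ∩ closure (ball x₀ r)) / r = flatness Γ x₀ r)
    (W : Set E2)
    (hW : W = Metric.sphere x₀ r ∩
      {y | Metric.infDist y (lineThru x₀ v) ≤ flatness Γ x₀ r * r})
    (hx₁W : x₁ ∈ W) (hx₂W : x₂ ∈ W)
    (hsides : connectedComponentIn W x₁ ≠ connectedComponentIn W x₂) :
    ∀ z ∈ Γ,
      ENNReal.ofReal ((Metric.infDist z (segment ℝ x₁ x₂)) ^ 2) ≤
        ENNReal.ofReal (2 * r) * (μH[1] Γ - ENNReal.ofReal (dist x₂ x₁)) := by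
  subst hΓ hx₁ hx₂
  rintro z ⟨t, htI, rfl⟩
  have hcb : closure (ball x₀ r) = closedBall x₀ r := closure_ball x₀ hr.ne'
  have hzb : dist (γ t) x₀ ≤ r := by
    have := hΓsub (Set.mem_image_of_mem γ htI)
    rw [hcb] at this
    exact mem_closedBall.1 this
  have h1b : dist (γ 0) x₀ ≤ r := le_of_eq (mem_sphere.1 hx₁s)
  have h2b : dist (γ 1) x₀ ≤ r := le_of_eq (mem_sphere.1 hx₂s)
  have hkey := key_real x₀ r hr (γ 0) (γ 1) (γ t) hzb h1b h2b
  have hmeas := sum_dist_le_H1 γ hcont hinj htI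
  calc ENNReal.ofReal ((Metric.infDist (γ t) (segment ℝ (γ 0) (γ 1)))^2)
      ≤ ENNReal.ofReal (2*r*((dist (γ 0) (γ t) + dist (γ t) (γ 1)) - dist (γ 1) (γ 0))) :=
        ENNReal.ofReal_le_ofReal hkey
    _ = ENNReal.ofReal (2*r) *
        ENNReal.ofReal ((dist (γ 0) (γ t) + dist (γ t) (γ 1)) - dist (γ 1) (γ 0)) :=
        ENNReal.ofReal_mul (by positivity)
    _ = ENNReal.ofReal (2*r) *
        (ENNReal.ofReal (dist (γ 0) (γ t) + dist (γ t) (γ 1)) -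
          ENNReal.ofReal (dist (γ 1) (γ 0))) := by
        rw [ENNReal.ofReal_sub _ dist_nonneg]
    _ ≤ ENNReal.ofReal (2*r) * (μH[1] (γ '' Set.Icc 0 1) - ENNReal.ofReal (dist (γ 1) (γ 0))) :=
        mul_le_mul_right (tsub_le_tsub_right hmeas _) _


end
end

section
/- Let Σ be an arcwise connected metric space and let D ⊆ Σ be an open subset such that the closure of D (in Σ) is not arcwise connected and the topological boundary of D in Σ consists of exactly two points. Then the set Σ \ D is arcwise connected. -/
open MeasureTheory Metric Set
open scoped ENNReal NNReal RealInnerProductSpace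

noncomputable section

section Arc13Helpers

variable {X : Type*} [MetricSpace X]


/-- Auxiliary: existence of an arc in `S` from `x` to `y`. -/
def ArcFrom13 (S : Set X) (x y : X) : Prop :=
  ∃ γ : ℝ → X, ContinuousOn γ (Set.Icc 0 1) ∧ Set.InjOn γ (Set.Icc 0 1) ∧
    γ 0 = x ∧ γ 1 = y ∧ Set.MapsTo γ (Set.Icc 0 1) S

lemma ArcFrom13.symm {S : Set X} {x y : X} (h : ArcFrom13 S x y) : ArcFrom13 S y x := by
  obtain ⟨γ, hc, hi, h0, h1, hS⟩ := h
  have hmaps : ∀ t ∈ Set.Icc (0:ℝ) 1, (1 - t) ∈ Set.Icc (0:ℝ) 1 := by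
    intro t ht
    exact ⟨by linarith [ht.2], by linarith [ht.1]⟩
  refine ⟨fun t => γ (1 - t), hc.comp (by fun_prop) hmaps, ?_, by simpa using h1,
    by simpa using h0, fun t ht => hS (hmaps t ht)⟩
  intro t ht u hu he
  have := hi (hmaps t ht) (hmaps u hu) he
  linarith

lemma arcFrom13_restrict {S : Set X} {f : ℝ → X} {p q : ℝ}
    (hc : ContinuousOn f (Set.Icc 0 1)) (hi : Set.InjOn f (Set.Icc 0 1))
    (hp : p ∈ Set.Icc (0:ℝ) 1) (hq : q ∈ Set.Icc (0:ℝ) 1) (hpq : p < q)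
    (hS : Set.MapsTo f (Set.Icc p q) S) : ArcFrom13 S (f p) (f q) := by
  have hsub : Set.Icc p q ⊆ Set.Icc (0:ℝ) 1 := Set.Icc_subset_Icc hp.1 hq.2
  have hmem : ∀ t ∈ Set.Icc (0:ℝ) 1, p + t * (q - p) ∈ Set.Icc p q := by
    intro t ht
    constructor
    · nlinarith [ht.1, ht.2]
    · nlinarith [ht.1, ht.2]
  refine ⟨fun t => f (p + t * (q - p)), hc.comp (by fun_prop) (fun t ht => hsub (hmem t ht)),
    ?_, by norm_num, by norm_num, fun t ht => hS (hmem t ht)⟩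
  intro t ht u hu he
  have h2 := hi (hsub (hmem t ht)) (hsub (hmem u hu)) he
  have h3 : t * (q - p) = u * (q - p) := by linarith
  have h4 : q - p ≠ 0 := by linarith
  exact mul_right_cancel₀ h4 h3

lemma csInf_not_mem_of_isOpen13 {U : Set ℝ} (hU : IsOpen U) (hne : U.Nonempty)
    (hbd : BddBelow U) : sInf U ∉ U := by
  intro hmem
  obtain ⟨ε, hε, hball⟩ := Metric.isOpen_iff.mp hU _ hmem
  have hd : dist (sInf U - ε/2) (sInf U) < ε := by
    rw [Real.dist_eq]
    have h : sInf U - ε/2 - sInf U = -(ε/2) := by ring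
    rw [h, abs_neg, abs_of_pos (by linarith)]
    linarith
  have := csInf_le hbd (hball hd)
  linarith

lemma csSup_not_mem_of_isOpen13 {U : Set ℝ} (hU : IsOpen U) (hne : U.Nonempty)
    (hbd : BddAbove U) : sSup U ∉ U := by
  intro hmem
  obtain ⟨ε, hε, hball⟩ := Metric.isOpen_iff.mp hU _ hmem
  have hd : dist (sSup U + ε/2) (sSup U) < ε := by
    rw [Real.dist_eq]
    have h : sSup U + ε/2 - sSup U = ε/2 := by ring
    rw [h, abs_of_pos (by linarith)]
    linarith
  have := le_csSup hbd (hball hd)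
  linarith

lemma isOpen_pre13 {γ : ℝ → X} (hγ : ContinuousOn γ (Set.Icc 0 1)) {O : Set X} (hO : IsOpen O)
    (h0 : γ 0 ∉ O) (h1 : γ 1 ∉ O) :
    IsOpen {t | t ∈ Set.Icc (0:ℝ) 1 ∧ γ t ∈ O} ∧
      {t | t ∈ Set.Icc (0:ℝ) 1 ∧ γ t ∈ O} ⊆ Set.Ioo 0 1 := by
  have hsub : {t | t ∈ Set.Icc (0:ℝ) 1 ∧ γ t ∈ O} ⊆ Set.Ioo 0 1 := by
    rintro t ⟨ht, htO⟩
    rcases eq_or_lt_of_le ht.1 with h | h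
    · exact absurd (by rw [← h] at htO; exact htO) h0
    rcases eq_or_lt_of_le ht.2 with h' | h'
    · exact absurd (by rw [h'] at htO; exact htO) h1
    exact ⟨h, h'⟩
  refine ⟨isOpen_iff_mem_nhds.mpr ?_, hsub⟩
  rintro t ⟨ht, htO⟩
  have hIoo := hsub ⟨ht, htO⟩
  have hnhds : Set.Icc (0:ℝ) 1 ∈ nhds t := Icc_mem_nhds hIoo.1 hIoo.2
  have hct : ContinuousAt γ t := (hγ t ht).continuousAt hnhds
  have hpre : γ ⁻¹' O ∈ nhds t := hct.preimage_mem_nhds (hO.mem_nhds htO)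
  filter_upwards [hnhds, hpre] with r hr1 hr2
  exact ⟨hr1, hr2⟩

lemma mem_closure_image13 {γ : ℝ → X} (hγ : ContinuousOn γ (Set.Icc 0 1)) {O : Set X}
    {V : Set ℝ} (hVsub : ∀ v ∈ V, v ∈ Set.Icc (0:ℝ) 1 ∧ γ v ∈ O) {c : ℝ}
    (hc : c ∈ Set.Icc (0:ℝ) 1) (hcc : c ∈ closure V) : γ c ∈ closure O := by
  have h1 : ContinuousWithinAt γ V c := (hγ c hc).mono (fun v hv => (hVsub v hv).1)
  have h2 := h1.mem_closure_image hcc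
  exact closure_mono (by rintro _ ⟨v, hv, rfl⟩; exact (hVsub v hv).2) h2


lemma ArcFrom13.splice {S : Set X} {x z y : X} (h1 : ArcFrom13 S x z)
    (h2 : ArcFrom13 S z y) (hxy : x ≠ y) : ArcFrom13 S x y := by
  classical
  obtain ⟨f, hfc, hfi, hf0, hf1, hfS⟩ := h1
  obtain ⟨g, hgc, hgi, hg0, hg1, hgS⟩ := h2
  set G := g '' Set.Icc 0 1 with hG
  have hGcl : IsClosed G := (isCompact_Icc.image_of_continuousOn hgc).isClosed
  set T := Set.Icc (0:ℝ) 1 ∩ f ⁻¹' G with hT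
  have hTcl : IsClosed T := hfc.preimage_isClosed_of_isClosed isClosed_Icc hGcl
  have h1T : (1:ℝ) ∈ T :=
    ⟨⟨zero_le_one, le_refl 1⟩, ⟨0, ⟨le_refl 0, zero_le_one⟩, by rw [hg0, hf1]⟩⟩
  have hTne : T.Nonempty := ⟨1, h1T⟩
  have hTbd : BddBelow T := ⟨0, fun t ht => ht.1.1⟩
  set s := sInf T with hs
  have hsT : s ∈ T := hTcl.csInf_mem hTne hTbd
  have hs01 : s ∈ Set.Icc (0:ℝ) 1 := hsT.1
  obtain ⟨u, hu01, hgu⟩ : ∃ u ∈ Set.Icc (0:ℝ) 1, g u = f s := hsT.2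
  have hkey : ∀ r ∈ Set.Icc (0:ℝ) 1, r < s → f r ∉ G := fun r hr hrs hmem =>
    absurd (csInf_le hTbd ⟨hr, hmem⟩) (not_le.mpr hrs)
  by_cases hcase : f s = g 1
  · have hs0 : 0 < s := by
      rcases eq_or_lt_of_le hs01.1 with h | h
      · exact absurd (by rw [← hf0, h, hcase, hg1]) hxy
      · exact h
    have hres := arcFrom13_restrict hfc hfi ⟨le_refl 0, zero_le_one⟩ hs01 hs0
      (fun t ht => hfS ⟨ht.1, le_trans ht.2 hs01.2⟩)
    rwa [hf0, hcase, hg1] at hres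
  · have hu1 : u < 1 := by
      rcases eq_or_lt_of_le hu01.2 with h | h
      · exact absurd (by rw [← hgu, h]) hcase
      · exact h
    by_cases hs0 : s = 0
    · have hres := arcFrom13_restrict hgc hgi hu01 ⟨zero_le_one, le_refl 1⟩ hu1
        (fun t ht => hgS ⟨le_trans hu01.1 ht.1, ht.2⟩)
      rwa [hgu, hs0, hf0, hg1] at hres
    · have hs0' : 0 < s := lt_of_le_of_ne hs01.1 (Ne.symm hs0)
      set h : ℝ → X := fun t => if t ≤ 1/2 then f (s * (2*t)) else g (u + (2*t - 1) * (1 - u))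
        with hh
      -- arguments stay in range
      have hargf : ∀ t : ℝ, 0 ≤ t → t ≤ 1/2 → s * (2*t) ∈ Set.Icc (0:ℝ) 1 := by
        intro t ht1 ht2
        constructor
        · nlinarith [hs01.1]
        · nlinarith [hs01.2, hs01.1]
      have hargg : ∀ t : ℝ, 1/2 ≤ t → t ≤ 1 → u + (2*t - 1) * (1 - u) ∈ Set.Icc (0:ℝ) 1 := by
        intro t ht1 ht2
        constructor
        · nlinarith [hu01.1, hu01.2]
        · nlinarith [hu01.2]
      have hF : ContinuousOn (fun t : ℝ => f (s * (2*t))) (Set.Icc 0 (1/2 : ℝ)) :=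
        hfc.comp (by fun_prop) (fun t ht => hargf t ht.1 ht.2)
      have hGc : ContinuousOn (fun t : ℝ => g (u + (2*t - 1) * (1 - u)))
          (Set.Icc (1/2 : ℝ) 1) :=
        hgc.comp (by fun_prop) (fun t ht => hargg t ht.1 ht.2)
      have hcont : ContinuousOn h (Set.Icc 0 1) := by
        rw [hh]
        apply ContinuousOn.if
        · intro r hr
          have hr2 : r ∈ frontier {a : ℝ | a ≤ 1/2} := hr.2
          rw [show {a : ℝ | a ≤ 1/2} = Set.Iic (1/2) from rfl, frontier_Iic] at hr2
          have : r = 1/2 := by simpa using hr2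
          subst this
          show f (s * (2*(1/2))) = g (u + (2*(1/2) - 1) * (1 - u))
          norm_num [hgu]
        · apply hF.mono
          intro r hr
          have : r ∈ closure (Set.Iic (1/2 : ℝ)) := hr.2
          rw [isClosed_Iic.closure_eq] at this
          exact ⟨hr.1.1, this⟩
        · apply hGc.mono
          intro r hr
          have h' : r ∈ closure {a : ℝ | ¬ a ≤ 1/2} := hr.2
          rw [show {a : ℝ | ¬ a ≤ 1/2} = Set.Ioi (1/2) from Set.ext fun _ => not_le,
            closure_Ioi] at h'
          exact ⟨h', hr.1.2⟩
      have hinj : Set.InjOn h (Set.Icc 0 1) := by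
        intro t1 ht1 t2 ht2 he
        rw [hh] at he
        simp only at he
        -- wlog-free case analysis
        by_cases c1 : t1 ≤ 1/2 <;> by_cases c2 : t2 ≤ 1/2
        · rw [if_pos c1, if_pos c2] at he
          have := hfi (hargf t1 ht1.1 c1) (hargf t2 ht2.1 c2) he
          have h3 : s * (2*t1) = s * (2*t2) := this
          nlinarith
        · rw [if_pos c1, if_neg c2] at he
          exfalso
          push_neg at c2
          have hmemG : f (s * (2*t1)) ∈ G :=
            ⟨u + (2*t2 - 1) * (1 - u), hargg t2 c2.le ht2.2, he.symm⟩
          have hge : ¬ (s * (2*t1) < s) := fun hlt =>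
            hkey _ (hargf t1 ht1.1 c1) hlt hmemG
          push_neg at hge
          have ht1half : t1 = 1/2 := by nlinarith
          have hargeq : s * (2*t1) = s := by rw [ht1half]; ring
          rw [hargeq, ← hgu] at he
          have := hgi hu01 (hargg t2 c2.le ht2.2) he
          have hz : (2*t2 - 1) * (1 - u) = 0 := by linarith
          rcases mul_eq_zero.mp hz with h' | h' <;> linarith
        · rw [if_neg c1, if_pos c2] at he
          exfalso
          push_neg at c1
          have hmemG : f (s * (2*t2)) ∈ G :=
            ⟨u + (2*t1 - 1) * (1 - u), hargg t1 c1.le ht1.2, he⟩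
          have hge : ¬ (s * (2*t2) < s) := fun hlt =>
            hkey _ (hargf t2 ht2.1 c2) hlt hmemG
          push_neg at hge
          have ht2half : t2 = 1/2 := by nlinarith
          have hargeq : s * (2*t2) = s := by rw [ht2half]; ring
          rw [hargeq, ← hgu] at he
          have := hgi (hargg t1 c1.le ht1.2) hu01 he
          have hz : (2*t1 - 1) * (1 - u) = 0 := by linarith
          rcases mul_eq_zero.mp hz with h' | h' <;> linarith
        · rw [if_neg c1, if_neg c2] at he
          push_neg at c1 c2
          have := hgi (hargg t1 c1.le ht1.2) (hargg t2 c2.le ht2.2) he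
          have hz : (2*t1 - 2*t2) * (1 - u) = 0 := by linarith [this]; 
          rcases mul_eq_zero.mp hz with h' | h'
          · linarith
          · linarith
      refine ⟨h, hcont, hinj, ?_, ?_, ?_⟩
      · rw [hh]
        simp only
        rw [if_pos (by norm_num : (0:ℝ) ≤ 1/2)]
        rw [show s * (2*(0:ℝ)) = 0 by ring, hf0]
      · rw [hh]
        simp only
        rw [if_neg (by norm_num : ¬ (1:ℝ) ≤ 1/2)]
        rw [show u + (2*(1:ℝ) - 1) * (1 - u) = 1 by ring, hg1]
      · intro t ht
        rw [hh]
        simp only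
        by_cases c : t ≤ 1/2
        · rw [if_pos c]; exact hfS (hargf t ht.1 c)
        · rw [if_neg c]; push_neg at c; exact hgS (hargg t c.le ht.2)

lemma arc_ab13 {D : Set X} (hD : IsOpen D) {a b : X} (hab : a ≠ b)
    (hfr : frontier D = {a, b})
    {δ : ℝ → X} (hδc : ContinuousOn δ (Set.Icc 0 1)) (hδi : Set.InjOn δ (Set.Icc 0 1))
    (h0 : δ 0 ∈ closure D) (h1 : δ 1 ∈ closure D)
    (hne : ∃ r ∈ Set.Icc (0:ℝ) 1, δ r ∉ closure D) :
    ArcFrom13 Dᶜ a b ∧ ArcFrom13 Dᶜ b a := by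
  set O := (closure D)ᶜ with hO
  have hOopen : IsOpen O := isClosed_closure.isOpen_compl
  set U := {t | t ∈ Set.Icc (0:ℝ) 1 ∧ δ t ∈ O} with hU
  obtain ⟨hUopen, hUsub⟩ := isOpen_pre13 hδc hOopen
    (by simp only [hO, Set.mem_compl_iff, not_not]; exact h0)
    (by simp only [hO, Set.mem_compl_iff, not_not]; exact h1)
  have hUne : U.Nonempty := by
    obtain ⟨r, hr, hrO⟩ := hne
    exact ⟨r, hr, hrO⟩
  have hbdB : BddBelow U := ⟨0, fun t ht => ht.1.1⟩
  have hbdA : BddAbove U := ⟨1, fun t ht => ht.1.2⟩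
  set s := sInf U with hsdef
  set t := sSup U with htdef
  have hsnot : s ∉ U := csInf_not_mem_of_isOpen13 hUopen hUne hbdB
  have htnot : t ∉ U := csSup_not_mem_of_isOpen13 hUopen hUne hbdA
  obtain ⟨w, hw⟩ := id hUne
  have hs01 : s ∈ Set.Icc (0:ℝ) 1 :=
    ⟨le_csInf ⟨w, hw⟩ (fun v hv => hv.1.1), le_trans (csInf_le hbdB hw) hw.1.2⟩
  have ht01 : t ∈ Set.Icc (0:ℝ) 1 :=
    ⟨le_trans hw.1.1 (le_csSup hbdA hw), csSup_le ⟨w, hw⟩ (fun v hv => hv.1.2)⟩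
  have hst : s < t := by
    obtain ⟨ε, hε, hball⟩ := Metric.isOpen_iff.mp hUopen w hw
    have hw1 : w - ε/2 ∈ U := hball (by
      rw [Metric.mem_ball, Real.dist_eq]
      rw [show w - ε/2 - w = -(ε/2) by ring, abs_neg, abs_of_pos (by linarith)]
      linarith)
    have hw2 : w + ε/2 ∈ U := hball (by
      rw [Metric.mem_ball, Real.dist_eq]
      rw [show w + ε/2 - w = ε/2 by ring, abs_of_pos (by linarith)]
      linarith)
    calc s ≤ w - ε/2 := csInf_le hbdB hw1
    _ < w + ε/2 := by linarith
    _ ≤ t := le_csSup hbdA hw2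
  -- membership in {a, b} for "boundary-type" points
  have hfr' : ∀ c : ℝ, c ∈ Set.Icc (0:ℝ) 1 → c ∉ U → c ∈ closure U → δ c = a ∨ δ c = b := by
    intro c hc hcnot hccl
    have hclO : δ c ∈ closure O :=
      mem_closure_image13 hδc (fun v hv => ⟨hv.1, hv.2⟩) hc hccl
    have hclD : δ c ∈ closure D := by
      by_contra hcd
      exact hcnot ⟨hc, hcd⟩
    have : δ c ∈ frontier D := by
      rw [frontier_eq_closure_inter_closure]
      exact ⟨hclD, closure_mono (compl_subset_compl.mpr subset_closure) hclO⟩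
    rw [hfr] at this
    simpa using this
  have hsab : δ s = a ∨ δ s = b :=
    hfr' s hs01 hsnot (csInf_mem_closure hUne hbdB)
  have htab : δ t = a ∨ δ t = b :=
    hfr' t ht01 htnot (csSup_mem_closure hUne hbdA)
  -- points of {a,b} are not in D
  have habD : ∀ z : X, z = a ∨ z = b → z ∉ D := by
    intro z hz hzD
    have : z ∈ frontier D := by rw [hfr]; rcases hz with h | h <;> simp [h]
    rw [hD.frontier_eq] at this
    exact this.2 hzD
  -- the restricted arc stays in Dᶜ
  have hmaps : Set.MapsTo δ (Set.Icc s t) Dᶜ := by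
    intro r hr
    by_contra hrD
    rw [Set.notMem_compl_iff] at hrD
    have hr01 : r ∈ Set.Icc (0:ℝ) 1 := ⟨le_trans hs01.1 hr.1, le_trans hr.2 ht01.2⟩
    have hrnotU : r ∉ U := fun h => h.2 (subset_closure hrD)
    have hrs : s ≠ r := fun h => habD (δ s) hsab (h ▸ hrD)
    have hrt : r ≠ t := fun h => habD (δ t) htab (h ▸ hrD)
    have hsr : s < r := lt_of_le_of_ne hr.1 hrs
    have hrt' : r < t := lt_of_le_of_ne hr.2 hrt
    -- left approach point
    set V₁ := U ∩ Set.Iio r with hV₁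
    have hV₁open : IsOpen V₁ := hUopen.inter isOpen_Iio
    have hV₁ne : V₁.Nonempty := by
      obtain ⟨v, hv, hvr⟩ := exists_lt_of_csInf_lt hUne (show sInf U < r from hsr)
      exact ⟨v, hv, hvr⟩
    have hV₁bd : BddAbove V₁ := ⟨r, fun v hv => le_of_lt hv.2⟩
    set s₂ := sSup V₁ with hs₂def
    have hs₂notV₁ : s₂ ∉ V₁ := csSup_not_mem_of_isOpen13 hV₁open hV₁ne hV₁bd
    have hs₂r : s₂ ≤ r := csSup_le hV₁ne (fun v hv => le_of_lt hv.2)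
    obtain ⟨v₁, hv₁⟩ := id hV₁ne
    have hs₂01 : s₂ ∈ Set.Icc (0:ℝ) 1 :=
      ⟨le_trans hv₁.1.1.1 (le_csSup hV₁bd hv₁), le_trans hs₂r hr01.2⟩
    have hs₂notU : s₂ ∉ U := by
      intro hmem
      apply hs₂notV₁
      refine ⟨hmem, ?_⟩
      exact lt_of_le_of_ne hs₂r (fun h => hrnotU (h ▸ hmem))
    have hs₂ab : δ s₂ = a ∨ δ s₂ = b := by
      apply hfr' s₂ hs₂01 hs₂notU
      have : s₂ ∈ closure V₁ := csSup_mem_closure hV₁ne hV₁bd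
      exact closure_mono (Set.inter_subset_left) this
    -- right approach point
    set V₂ := U ∩ Set.Ioi r with hV₂
    have hV₂open : IsOpen V₂ := hUopen.inter isOpen_Ioi
    have hV₂ne : V₂.Nonempty := by
      obtain ⟨v, hv, hvr⟩ := exists_lt_of_lt_csSup hUne (show r < sSup U from hrt')
      exact ⟨v, hv, hvr⟩
    have hV₂bd : BddBelow V₂ := ⟨r, fun v hv => le_of_lt hv.2⟩
    set t₂ := sInf V₂ with ht₂def
    have ht₂notV₂ : t₂ ∉ V₂ := csInf_not_mem_of_isOpen13 hV₂open hV₂ne hV₂bd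
    have ht₂r : r ≤ t₂ := le_csInf hV₂ne (fun v hv => le_of_lt hv.2)
    obtain ⟨v₂, hv₂⟩ := id hV₂ne
    have ht₂01 : t₂ ∈ Set.Icc (0:ℝ) 1 :=
      ⟨le_trans hr01.1 ht₂r, le_trans (csInf_le hV₂bd hv₂) hv₂.1.1.2⟩
    have ht₂notU : t₂ ∉ U := by
      intro hmem
      apply ht₂notV₂
      refine ⟨hmem, ?_⟩
      exact lt_of_le_of_ne ht₂r (fun h => hrnotU (h.symm ▸ hmem))
    have ht₂ab : δ t₂ = a ∨ δ t₂ = b := by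
      apply hfr' t₂ ht₂01 ht₂notU
      have : t₂ ∈ closure V₂ := csInf_mem_closure hV₂ne hV₂bd
      exact closure_mono (Set.inter_subset_left) this
    -- s < s₂ < t₂ : three distinct parameters
    have hss₂ : s < s₂ := by
      have hle : s ≤ s₂ := le_trans (csInf_le hbdB hv₁.1) (le_csSup hV₁bd hv₁)
      rcases eq_or_lt_of_le hle with h | h
      · exfalso
        have : v₁ = s := le_antisymm (by linarith [le_csSup hV₁bd hv₁, h]) (csInf_le hbdB hv₁.1)
        exact hsnot (this ▸ hv₁.1)
      · exact h
    have hs₂t₂ : s₂ < t₂ := by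
      have h1' : s₂ ≠ r := fun h => habD (δ s₂) hs₂ab (h ▸ hrD)
      have h2' : r ≠ t₂ := fun h => habD (δ t₂) ht₂ab (h ▸ hrD)
      exact lt_of_lt_of_le (lt_of_le_of_ne hs₂r h1') ht₂r
    have hne12 : δ s ≠ δ s₂ := fun h => (ne_of_lt hss₂) (hδi hs01 hs₂01 h)
    have hne13 : δ s ≠ δ t₂ := fun h => (ne_of_lt (lt_trans hss₂ hs₂t₂)) (hδi hs01 ht₂01 h)
    have hne23 : δ s₂ ≠ δ t₂ := fun h => (ne_of_lt hs₂t₂) (hδi hs₂01 ht₂01 h)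
    rcases hsab with h1' | h1' <;> rcases hs₂ab with h2' | h2' <;> rcases ht₂ab with h3' | h3'
    exacts [hne12 (h1'.trans h2'.symm), hne12 (h1'.trans h2'.symm),
      hne13 (h1'.trans h3'.symm), hne23 (h2'.trans h3'.symm),
      hne23 (h2'.trans h3'.symm), hne13 (h1'.trans h3'.symm),
      hne12 (h1'.trans h2'.symm), hne12 (h1'.trans h2'.symm)]
  -- now assemble
  have harc : ArcFrom13 Dᶜ (δ s) (δ t) := arcFrom13_restrict hδc hδi hs01 ht01 hst hmaps
  have hstne : δ s ≠ δ t := fun h => (ne_of_lt hst) (hδi hs01 ht01 h)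
  rcases hsab with h1' | h1' <;> rcases htab with h2' | h2'
  · exact absurd (h1'.trans h2'.symm) hstne
  · rw [h1', h2'] at harc; exact ⟨harc, harc.symm⟩
  · rw [h1', h2'] at harc; exact ⟨harc.symm, harc⟩
  · exact absurd (h1'.trans h2'.symm) hstne

end Arc13Helpers

/-- in an arcwise connected metric space, if `D` is open, its closure is not
arcwise connected and its topological boundary consists of exactly two points, then the
complement of `D` is arcwise connected. -/
theorem complement_arcConnected_of_two_point_boundary
    {X : Type*} [MetricSpace X]
    (harc : ArcConnected (Set.univ : Set X))
    (D : Set X) (hD : IsOpen D)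
    (hncl : ¬ ArcConnected (closure D))
    (a b : X) (hab : a ≠ b) (hfr : frontier D = {a, b}) :
    ArcConnected Dᶜ := by
  classical
  -- Step C: an arc from `a` to `b` avoiding `D`.
  have hncl' : ∃ p ∈ closure D, ∃ q ∈ closure D, p ≠ q ∧ ¬ ArcFrom13 (closure D) p q := by
    by_contra hc
    push_neg at hc
    exact hncl (fun p hp q hq hpq => hc p hp q hq hpq)
  obtain ⟨p, hp, q, hq, hpq, hno⟩ := hncl'
  obtain ⟨δ, hδc, hδi, hδ0, hδ1, -⟩ := harc p (Set.mem_univ p) q (Set.mem_univ q) hpq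
  have hex : ∃ r ∈ Set.Icc (0:ℝ) 1, δ r ∉ closure D := by
    by_contra hc
    push_neg at hc
    exact hno ⟨δ, hδc, hδi, hδ0, hδ1, fun r hr => hc r hr⟩
  obtain ⟨harcab, harcba⟩ := arc_ab13 hD hab hfr hδc hδi
    (by rw [hδ0]; exact hp) (by rw [hδ1]; exact hq) hex
  -- Main construction
  intro x hx y hy hxy
  obtain ⟨γ, hγc, hγi, hγ0, hγ1, -⟩ := harc x (Set.mem_univ x) y (Set.mem_univ y) hxy
  have hx' : γ 0 ∉ D := by rw [hγ0]; exact hx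
  have hy' : γ 1 ∉ D := by rw [hγ1]; exact hy
  by_cases hcase : ∃ r ∈ Set.Icc (0:ℝ) 1, γ r ∈ D
  · -- the arc crosses D; cut out [s, t] and replace by an arc through Dᶜ
    set U := {r | r ∈ Set.Icc (0:ℝ) 1 ∧ γ r ∈ D} with hUdef
    obtain ⟨hUopen, hUsub⟩ := isOpen_pre13 hγc hD hx' hy'
    have hUne : U.Nonempty := by
      obtain ⟨r, hr, hrD⟩ := hcase
      exact ⟨r, hr, hrD⟩
    have hbdB : BddBelow U := ⟨0, fun r hr => hr.1.1⟩
    have hbdA : BddAbove U := ⟨1, fun r hr => hr.1.2⟩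
    set s := sInf U with hsdef
    set t := sSup U with htdef
    have hsnot : s ∉ U := csInf_not_mem_of_isOpen13 hUopen hUne hbdB
    have htnot : t ∉ U := csSup_not_mem_of_isOpen13 hUopen hUne hbdA
    obtain ⟨w, hw⟩ := id hUne
    have hs01 : s ∈ Set.Icc (0:ℝ) 1 :=
      ⟨le_csInf ⟨w, hw⟩ (fun v hv => hv.1.1), le_trans (csInf_le hbdB hw) hw.1.2⟩
    have ht01 : t ∈ Set.Icc (0:ℝ) 1 :=
      ⟨le_trans hw.1.1 (le_csSup hbdA hw), csSup_le ⟨w, hw⟩ (fun v hv => hv.1.2)⟩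
    have hst : s < t := by
      obtain ⟨ε, hε, hball⟩ := Metric.isOpen_iff.mp hUopen w hw
      have hw1 : w - ε/2 ∈ U := hball (by
        rw [Metric.mem_ball, Real.dist_eq]
        rw [show w - ε/2 - w = -(ε/2) by ring, abs_neg, abs_of_pos (by linarith)]
        linarith)
      have hw2 : w + ε/2 ∈ U := hball (by
        rw [Metric.mem_ball, Real.dist_eq]
        rw [show w + ε/2 - w = ε/2 by ring, abs_of_pos (by linarith)]
        linarith)
      calc s ≤ w - ε/2 := csInf_le hbdB hw1
      _ < w + ε/2 := by linarith
      _ ≤ t := le_csSup hbdA hw2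
    -- γ s and γ t are boundary points
    have hbdry : ∀ c : ℝ, c ∈ Set.Icc (0:ℝ) 1 → c ∉ U → c ∈ closure U →
        γ c = a ∨ γ c = b := by
      intro c hc hcnot hccl
      have hclD : γ c ∈ closure D :=
        mem_closure_image13 hγc (fun v hv => ⟨hv.1, hv.2⟩) hc hccl
      have hcD : γ c ∉ D := fun h => hcnot ⟨hc, h⟩
      have : γ c ∈ frontier D := by
        rw [hD.frontier_eq]; exact ⟨hclD, hcD⟩
      rw [hfr] at this
      simpa using this
    have hsab : γ s = a ∨ γ s = b := hbdry s hs01 hsnot (csInf_mem_closure hUne hbdB)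
    have htab : γ t = a ∨ γ t = b := hbdry t ht01 htnot (csSup_mem_closure hUne hbdA)
    have hstne : γ s ≠ γ t := fun h => (ne_of_lt hst) (hγi hs01 ht01 h)
    -- middle arc
    have hmid : ArcFrom13 Dᶜ (γ s) (γ t) := by
      rcases hsab with h1' | h1' <;> rcases htab with h2' | h2'
      · exact absurd (h1'.trans h2'.symm) hstne
      · rw [h1', h2']; exact harcab
      · rw [h1', h2']; exact harcba
      · exact absurd (h1'.trans h2'.symm) hstne
    -- left and right pieces avoid D
    have hleft : Set.MapsTo γ (Set.Icc 0 s) Dᶜ := by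
      intro r hr hrD
      have hr01 : r ∈ Set.Icc (0:ℝ) 1 := ⟨hr.1, le_trans hr.2 hs01.2⟩
      have : r ∈ U := ⟨hr01, hrD⟩
      have := csInf_le hbdB this
      have hr_eq : r = s := le_antisymm hr.2 this
      exact hsnot (hr_eq ▸ ⟨hr01, hrD⟩)
    have hright : Set.MapsTo γ (Set.Icc t 1) Dᶜ := by
      intro r hr hrD
      have hr01 : r ∈ Set.Icc (0:ℝ) 1 := ⟨le_trans ht01.1 hr.1, hr.2⟩
      have : r ∈ U := ⟨hr01, hrD⟩
      have := le_csSup hbdA this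
      have hr_eq : r = t := le_antisymm this hr.1
      exact htnot (hr_eq ▸ ⟨hr01, hrD⟩)
    -- assemble, with degenerate cases at the endpoints
    have hsy : γ s ≠ y := by
      intro h
      rw [← hγ1] at h
      have := hγi hs01 ⟨zero_le_one, le_refl 1⟩ h
      exact (ne_of_lt (lt_of_lt_of_le hst ht01.2)) this
    have hA2 : ArcFrom13 Dᶜ (γ s) y := by
      rcases eq_or_lt_of_le ht01.2 with h | h
      · -- t = 1 : γ t = y
        have : γ t = y := by rw [h, hγ1]
        rwa [← this]
      · -- t < 1 : splice middle with right piece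
        have hR : ArcFrom13 Dᶜ (γ t) (γ 1) :=
          arcFrom13_restrict hγc hγi ht01 ⟨zero_le_one, le_refl 1⟩ h hright
        rw [hγ1] at hR
        exact hmid.splice hR hsy
    rcases eq_or_lt_of_le hs01.1 with h | h
    · -- s = 0 : x = γ s
      have : γ s = x := by rw [← h, hγ0]
      rw [this] at hA2
      exact hA2
    · -- 0 < s : splice left piece with the rest
      have hL : ArcFrom13 Dᶜ (γ 0) (γ s) :=
        arcFrom13_restrict hγc hγi ⟨le_refl 0, zero_le_one⟩ hs01 h hleft
      rw [hγ0] at hL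
      exact hL.splice hA2 hxy
  · -- the arc avoids D entirely
    push_neg at hcase
    exact ⟨γ, hγc, hγi, hγ0, hγ1, fun r hr => hcase r hr⟩


end
end
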